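/- arXiv:2010.07898 — 9 statements merged into one kernel-verified Lean document; each statement's English description precedes it below -/
import Mathlib

section
/- Let d ≥ 1 and let X ∈ M_d(ℂ)⊗M_d(ℂ). Define d×d complex matrices A, B, C entrywise by A_ij = ⟨ij|X|ij⟩, B_ij = ⟨ii|X|jj⟩, and C_ij = ⟨ij|X|ji⟩ for all i,j ∈ [d] (so A, B, C have equal diagonals). Then the average of X under conjugation by local diagonal sign matrices equals X^{(3)}_{(A,B,C)}; that is, 2^{−d} Σ_{ε ∈ {−1,+1}^d} (O_ε ⊗ O_ε) X (O_ε ⊗ O_ε) = X^{(3)}_{(A,B,C)}, where O_ε denotes the diagonal matrix with diagonal entries ε_1, …, ε_d. -/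
open Matrix Kronecker

/-- The LDOI matrix `X^{(3)}_{(A,B,C)}` associated to a triple of `d × d` matrices. -/
def X3 {d : ℕ} (A B C : Matrix (Fin d) (Fin d) ℂ) :
    Matrix (Fin d × Fin d) (Fin d × Fin d) ℂ :=
  Matrix.of fun p q =>
    if p.1 = q.1 ∧ p.2 = q.2 then A p.1 p.2
    else if p.1 = p.2 ∧ q.1 = q.2 then B p.1 q.1
    else if p.1 = q.2 ∧ p.2 = q.1 then C p.1 q.1
    else 0

/-- The diagonal sign matrix `O_ε` with diagonal entries `ε i ∈ {−1, +1}`. -/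
def signDiag {d : ℕ} (ε : Fin d → ℤˣ) : Matrix (Fin d) (Fin d) ℂ :=
  Matrix.diagonal fun i => ((ε i : ℤ) : ℂ)


lemma LDOI_flip_sum {d : ℕ} (i : Fin d) (f : (Fin d → ℤˣ) → ℂ)
    (h : ∀ ε, f (Function.update ε i (-(ε i))) = - f ε) :
    ∑ ε : Fin d → ℤˣ, f ε = 0 := by
  have hinv : Function.Involutive
      (fun ε : Fin d → ℤˣ => Function.update ε i (-(ε i))) := by
    intro ε
    simp [Function.update_idem, Function.update_self, Function.update_eq_self]
  have hsum : ∑ ε : Fin d → ℤˣ, f (Function.update ε i (-(ε i)))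
      = ∑ ε : Fin d → ℤˣ, f ε :=
    Fintype.sum_bijective _ hinv.bijective _ _ (fun ε => rfl)
  have h2 : ∑ ε : Fin d → ℤˣ, f ε = - ∑ ε : Fin d → ℤˣ, f ε := by
    conv_lhs => rw [← hsum]
    simp only [h, Finset.sum_neg_distrib]
  have h3 : ∑ ε : Fin d → ℤˣ, f ε + ∑ ε : Fin d → ℤˣ, f ε = 0 := by
    nth_rewrite 2 [h2]; simp
  exact add_self_eq_zero.mp h3

-- singleton at any position: generic helper
lemma LDOI_sign_single {d : ℕ} (i b c e : Fin d) (g : ℤˣ → ℤˣ → ℤˣ → ℤˣ → ℤˣ)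
    (hb : b ≠ i) (hc : c ≠ i) (he : e ≠ i)
    (hg : ∀ u v w x : ℤˣ, g (-u) v w x = - g u v w x) :
    ∑ ε : Fin d → ℤˣ, ((↑(g (ε i) (ε b) (ε c) (ε e)) : ℤ) : ℂ) = 0 := by
  apply LDOI_flip_sum i
  intro ε
  rw [Function.update_self, Function.update_of_ne hb, Function.update_of_ne hc,
    Function.update_of_ne he, hg]
  push_cast
  ring

lemma LDOI_units_key : ∀ u v : ℤˣ, u*u*v*v = 1 ∧ u*v*u*v = 1 ∧ u*v*v*u = 1 := by decide

lemma LDOI_sign_sum {d : ℕ} (a b c e : Fin d) :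
    ∑ ε : Fin d → ℤˣ, ((↑(ε a * ε b * ε c * ε e) : ℤ) : ℂ)
      = if (a = b ∧ c = e) ∨ (a = c ∧ b = e) ∨ (a = e ∧ b = c)
        then (2 : ℂ) ^ d else 0 := by
  split_ifs with h
  · have h1 : ∀ ε : Fin d → ℤˣ, ε a * ε b * ε c * ε e = 1 := by
      intro ε
      rcases h with ⟨h1, h2⟩ | ⟨h1, h2⟩ | ⟨h1, h2⟩
      · rw [h1, h2]; exact (LDOI_units_key (ε b) (ε e)).1
      · rw [h1, h2]; exact (LDOI_units_key (ε c) (ε e)).2.1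
      · rw [h1, h2]; exact (LDOI_units_key (ε e) (ε c)).2.2
    simp only [h1]
    simp [Finset.card_univ, Fintype.card_fun]
  · have hsplit : (a ≠ b ∧ a ≠ c ∧ a ≠ e) ∨ (b ≠ a ∧ b ≠ c ∧ b ≠ e)
        ∨ (c ≠ a ∧ c ≠ b ∧ c ≠ e) ∨ (e ≠ a ∧ e ≠ b ∧ e ≠ c) := by
      by_cases h1 : a = b <;> by_cases h2 : a = c <;> by_cases h3 : a = e <;>
        by_cases h4 : b = c <;> by_cases h5 : b = e <;> by_cases h6 : c = e <;>
        simp_all <;> tauto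
    rcases hsplit with ⟨h1, h2, h3⟩ | ⟨h1, h2, h3⟩ | ⟨h1, h2, h3⟩ | ⟨h1, h2, h3⟩
    · exact LDOI_sign_single a b c e (fun u v w x => u * v * w * x)
        h1.symm h2.symm h3.symm (by intros; simp [neg_mul, mul_neg])
    · exact LDOI_sign_single b a c e (fun u v w x => v * u * w * x)
        h1.symm h2.symm h3.symm (by intros; simp [neg_mul, mul_neg])
    · exact LDOI_sign_single c a b e (fun u v w x => v * w * u * x)
        h1.symm h2.symm h3.symm (by intros; simp [neg_mul, mul_neg])
    · exact LDOI_sign_single e a b c (fun u v w x => v * w * x * u)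
        h1.symm h2.symm h3.symm (by intros; simp [neg_mul, mul_neg])

theorem stmt0 {d : ℕ} (hd : 1 ≤ d)
    (X : Matrix (Fin d × Fin d) (Fin d × Fin d) ℂ)
    (A B C : Matrix (Fin d) (Fin d) ℂ)
    (hA : ∀ i j, A i j = X (i, j) (i, j))
    (hB : ∀ i j, B i j = X (i, i) (j, j))
    (hC : ∀ i j, C i j = X (i, j) (j, i)) :
    ((2 : ℂ) ^ d)⁻¹ • ∑ ε : Fin d → ℤˣ,
        (signDiag ε ⊗ₖ signDiag ε) * X * (signDiag ε ⊗ₖ signDiag ε)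
      = X3 A B C := by
  have hne : ((2 : ℂ) ^ d) ≠ 0 := pow_ne_zero _ two_ne_zero
  ext ⟨i, j⟩ ⟨k, l⟩
  have hentry : ∀ ε : Fin d → ℤˣ,
      ((signDiag ε ⊗ₖ signDiag ε) * X * (signDiag ε ⊗ₖ signDiag ε)) (i, j) (k, l)
        = ((↑(ε i * ε j * ε k * ε l) : ℤ) : ℂ) * X (i, j) (k, l) := by
    intro ε
    rw [signDiag, Matrix.diagonal_kronecker_diagonal, Matrix.mul_diagonal,
      Matrix.diagonal_mul]
    push_cast
    ring
  simp only [Matrix.smul_apply, Matrix.sum_apply, hentry, smul_eq_mul]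
  rw [← Finset.sum_mul, LDOI_sign_sum i j k l]
  simp only [X3, Matrix.of_apply]
  by_cases h1 : i = k ∧ j = l
  · obtain ⟨rfl, rfl⟩ := h1
    rw [if_pos (⟨rfl, rfl⟩ : i = i ∧ j = j), hA,
      if_pos (Or.inr (Or.inl ⟨rfl, rfl⟩))]
    field_simp
  · rw [if_neg h1]
    by_cases h2 : i = j ∧ k = l
    · obtain ⟨rfl, rfl⟩ := h2
      rw [if_pos (⟨rfl, rfl⟩ : i = i ∧ k = k), hB,
        if_pos (Or.inl ⟨rfl, rfl⟩)]
      field_simp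
    · rw [if_neg h2]
      by_cases h3 : i = l ∧ j = k
      · obtain ⟨rfl, rfl⟩ := h3
        rw [if_pos (⟨rfl, rfl⟩ : i = i ∧ j = j), hC,
          if_pos (Or.inr (Or.inr ⟨rfl, rfl⟩))]
        field_simp
      · rw [if_neg h3, if_neg (by tauto)]
        ring
end

section
/- Let A, B, C be d×d complex matrices with equal diagonals. Then the matrix X^{(3)}_{(A,B,C)} ∈ M_d(ℂ)⊗M_d(ℂ) is separable if and only if the triple (A,B,C) is triplewise completely positive (TCP). -/
open Matrix Kronecker

/-- A bipartite matrix is separable if it is a finite sum of Kronecker products of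
rank-one matrices `v v^*` and `w w^*`. -/
def Separable {d : ℕ} (X : Matrix (Fin d × Fin d) (Fin d × Fin d) ℂ) : Prop :=
  ∃ (n : ℕ) (v w : Fin n → Fin d → ℂ),
    X = ∑ k, (Matrix.vecMulVec (v k) (star (v k))) ⊗ₖ (Matrix.vecMulVec (w k) (star (w k)))

/-- Triplewise complete positivity of a triple `(A,B,C)`. -/
def TCP {d : ℕ} (A B C : Matrix (Fin d) (Fin d) ℂ) : Prop :=
  ∃ (d' : ℕ) (V W : Matrix (Fin d) (Fin d') ℂ),
    A = (V ⊙ V.map star) * (W ⊙ W.map star)ᴴ ∧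
    B = (V ⊙ W) * (V ⊙ W)ᴴ ∧
    C = (V ⊙ W.map star) * (V ⊙ W.map star)ᴴ

def sgn3 {d : ℕ} (s : Fin d → Bool) (a : Fin d) : ℂ := if s a then -1 else 1

lemma signSum3 {d : ℕ} (i i' j j' : Fin d) :
    ∑ s : Fin d → Bool, sgn3 s i * sgn3 s i' * sgn3 s j * sgn3 s j'
    = if (i = i' ∧ j = j') ∨ (i = j ∧ i' = j') ∨ (i = j' ∧ j = i') then (2:ℂ)^d else 0 := by
  have key : ∀ s : Fin d → Bool,
      sgn3 s i * sgn3 s i' * sgn3 s j * sgn3 s j'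
      = ∏ m, ((if i = m then sgn3 s m else 1) * (if i' = m then sgn3 s m else 1) *
              (if j = m then sgn3 s m else 1) * (if j' = m then sgn3 s m else 1)) := by
    intro s
    rw [Finset.prod_mul_distrib, Finset.prod_mul_distrib, Finset.prod_mul_distrib]
    simp [Finset.prod_ite_eq, sgn3]
  simp_rw [key]
  simp only [sgn3]
  rw [← Fintype.piFinset_univ,
    ← Finset.prod_univ_sum (fun _ : Fin d => (Finset.univ : Finset Bool))
      (fun m b => (if i = m then (if b then (-1:ℂ) else 1) else 1) *
        (if i' = m then (if b then (-1:ℂ) else 1) else 1) *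
        (if j = m then (if b then (-1:ℂ) else 1) else 1) *
        (if j' = m then (if b then (-1:ℂ) else 1) else 1))]
  have factor : ∀ m : Fin d, (∑ b : Bool,
      ((if i = m then (if b then (-1:ℂ) else 1) else 1) * (if i' = m then (if b then (-1:ℂ) else 1) else 1) *
       (if j = m then (if b then (-1:ℂ) else 1) else 1) * (if j' = m then (if b then (-1:ℂ) else 1) else 1)))
      = 1 + (if i = m then (-1:ℂ) else 1) * (if i' = m then (-1:ℂ) else 1) *
            (if j = m then (-1:ℂ) else 1) * (if j' = m then (-1:ℂ) else 1) := by
    intro m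
    rw [Fintype.sum_bool]
    simp [add_comm]
  rw [Finset.prod_congr rfl (fun m _ => factor m)]
  by_cases hpat : (i = i' ∧ j = j') ∨ (i = j ∧ i' = j') ∨ (i = j' ∧ j = i')
  · rw [if_pos hpat]
    have h2 : ∀ m : Fin d, (1 + (if i = m then (-1:ℂ) else 1) * (if i' = m then (-1:ℂ) else 1) *
            (if j = m then (-1:ℂ) else 1) * (if j' = m then (-1:ℂ) else 1)) = 2 := by
      intro m
      rcases hpat with ⟨h1, h2⟩ | ⟨h1, h2⟩ | ⟨h1, h2⟩ <;> subst h1 <;> subst h2 <;>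
        split_ifs <;> norm_num
    rw [Finset.prod_congr rfl (fun m _ => h2 m)]
    simp
  · rw [if_neg hpat]
    push_neg at hpat
    obtain ⟨h1, h2, h3⟩ := hpat
    have : ∃ m : Fin d, (1 + (if i = m then (-1:ℂ) else 1) * (if i' = m then (-1:ℂ) else 1) *
            (if j = m then (-1:ℂ) else 1) * (if j' = m then (-1:ℂ) else 1)) = 0 := by
      by_cases hii' : i = i'
      · have hjj' : j ≠ j' := fun h => (h1 hii' h).elim
        refine ⟨j, ?_⟩
        subst hii'
        have hj : j' ≠ j := Ne.symm hjj'
        by_cases h : i = j <;> simp [h, hj]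
      · by_cases hij : i = j
        · have hi'j' : i' ≠ j' := fun h => (h2 hij h).elim
          refine ⟨i', ?_⟩
          subst hij
          simp [hii', Ne.symm hi'j']
        · by_cases hij' : i = j'
          · have hji' : j ≠ i' := fun h => (h3 hij' h).elim
            refine ⟨i', ?_⟩
            subst hij'
            simp [hii', hji']
          · exact ⟨i, by simp [Ne.symm hii', Ne.symm hij, Ne.symm hij']⟩
    obtain ⟨m, hm⟩ := this
    exact Finset.prod_eq_zero (Finset.mem_univ m) hm

theorem stmt1 {d : ℕ} (A B C : Matrix (Fin d) (Fin d) ℂ)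
    (hdiag : ∀ i, A i i = B i i ∧ A i i = C i i) :
    Separable (X3 A B C) ↔ TCP A B C := by
  constructor
  · rintro ⟨n, v, w, hX⟩
    have hent : ∀ p q : Fin d × Fin d, X3 A B C p q
        = ∑ k, v k p.1 * star (v k q.1) * (w k p.2 * star (w k q.2)) := by
      intro p q
      rw [hX]
      simp [Matrix.sum_apply, Matrix.vecMulVec_apply, Matrix.kroneckerMap_apply]
    refine ⟨n, Matrix.of (fun i k => v k i), Matrix.of (fun i k => w k i), ?_, ?_, ?_⟩
    · ext i j
      have h1 : A i j = X3 A B C (i, j) (i, j) := by simp [X3]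
      rw [h1, hent]
      simp only [Matrix.mul_apply, Matrix.hadamard_apply, Matrix.conjTranspose_apply,
        Matrix.map_apply, Matrix.of_apply]
      exact Finset.sum_congr rfl fun k _ => by simp only [star_mul', star_star]; ring
    · ext i j
      by_cases hij : i = j
      · subst hij
        have h1 : B i i = X3 A B C (i, i) (i, i) := by
          simp [X3]; exact ((hdiag i).1).symm
        rw [h1, hent]
        simp only [Matrix.mul_apply, Matrix.hadamard_apply, Matrix.conjTranspose_apply,
          Matrix.map_apply, Matrix.of_apply]
        exact Finset.sum_congr rfl fun k _ => by simp only [star_mul', star_star]; ring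
      · have h1 : B i j = X3 A B C (i, i) (j, j) := by simp [X3, hij]
        rw [h1, hent]
        simp only [Matrix.mul_apply, Matrix.hadamard_apply, Matrix.conjTranspose_apply,
          Matrix.map_apply, Matrix.of_apply]
        exact Finset.sum_congr rfl fun k _ => by simp only [star_mul', star_star]; ring
    · ext i j
      by_cases hij : i = j
      · subst hij
        have h1 : C i i = X3 A B C (i, i) (i, i) := by
          simp [X3]; exact ((hdiag i).2).symm
        rw [h1, hent]
        simp only [Matrix.mul_apply, Matrix.hadamard_apply, Matrix.conjTranspose_apply,
          Matrix.map_apply, Matrix.of_apply]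
        exact Finset.sum_congr rfl fun k _ => by simp only [star_mul', star_star]; ring
      · have h1 : C i j = X3 A B C (i, j) (j, i) := by simp [X3, hij]
        rw [h1, hent]
        simp only [Matrix.mul_apply, Matrix.hadamard_apply, Matrix.conjTranspose_apply,
          Matrix.map_apply, Matrix.of_apply]
        exact Finset.sum_congr rfl fun k _ => by simp only [star_mul', star_star]; ring
  · rintro ⟨d', V, W, hA, hB, hC⟩
    classical
    set c : ℝ := (Real.sqrt 2)⁻¹ ^ d with hcdef
    have hc : ((c : ℂ) * (c : ℂ)) * (2:ℂ)^d = 1 := by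
      have hcc : (c * c : ℝ) = (2⁻¹ : ℝ) ^ d := by
        rw [hcdef, ← mul_pow, ← mul_inv, Real.mul_self_sqrt (by norm_num)]
      have h2 : ((c:ℂ) * c) = ((2:ℂ)⁻¹)^d := by
        rw [← Complex.ofReal_mul, hcc]
        norm_num
      rw [h2, inv_pow, inv_mul_cancel₀ (pow_ne_zero _ two_ne_zero)]
    let ι := Fin d' × (Fin d → Bool)
    let e := Fintype.equivFin ι
    let vv : ι → Fin d → ℂ := fun ks m => (c : ℂ) * sgn3 ks.2 m * V m ks.1
    let ww : ι → Fin d → ℂ := fun ks m => sgn3 ks.2 m * W m ks.1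
    refine ⟨Fintype.card ι, fun k => vv (e.symm k), fun k => ww (e.symm k), ?_⟩
    have hsum :
        (∑ k : Fin (Fintype.card ι),
          (Matrix.vecMulVec (vv (e.symm k)) (star (vv (e.symm k)))) ⊗ₖ
            (Matrix.vecMulVec (ww (e.symm k)) (star (ww (e.symm k)))))
        = ∑ x : ι, (Matrix.vecMulVec (vv x) (star (vv x))) ⊗ₖ
            (Matrix.vecMulVec (ww x) (star (ww x))) :=
      Equiv.sum_comp e.symm (fun x : ι => (Matrix.vecMulVec (vv x) (star (vv x))) ⊗ₖ
            (Matrix.vecMulVec (ww x) (star (ww x))))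
    rw [hsum]
    ext p q
    obtain ⟨i, j⟩ := p
    obtain ⟨i', j'⟩ := q
    rw [Matrix.sum_apply]
    have hterm : ∀ x : ι,
        ((Matrix.vecMulVec (vv x) (star (vv x))) ⊗ₖ
          (Matrix.vecMulVec (ww x) (star (ww x)))) (i, j) (i', j')
        = (sgn3 x.2 i * sgn3 x.2 i' * sgn3 x.2 j * sgn3 x.2 j') *
          (((c:ℂ) * c) * (V i x.1 * star (V i' x.1) * (W j x.1 * star (W j' x.1)))) := by
      intro x
      simp only [Matrix.kroneckerMap_apply, Matrix.vecMulVec_apply, Pi.star_apply, vv, ww,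
        sgn3, star_mul', star_star, apply_ite (star : ℂ → ℂ), star_neg, star_one,
        Complex.star_def, Complex.conj_ofReal]
      ring
    rw [Finset.sum_congr rfl fun x _ => hterm x]
    rw [Fintype.sum_prod_type]
    have inner : ∀ k : Fin d',
        (∑ s : Fin d → Bool, (sgn3 s i * sgn3 s i' * sgn3 s j * sgn3 s j') *
          (((c:ℂ) * c) * (V i k * star (V i' k) * (W j k * star (W j' k)))))
        = (if (i = i' ∧ j = j') ∨ (i = j ∧ i' = j') ∨ (i = j' ∧ j = i') then (2:ℂ)^d else 0) *
          (((c:ℂ) * c) * (V i k * star (V i' k) * (W j k * star (W j' k)))) := by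
      intro k
      rw [← Finset.sum_mul, signSum3]
    rw [Finset.sum_congr rfl fun k _ => inner k]
    by_cases hpat : (i = i' ∧ j = j') ∨ (i = j ∧ i' = j') ∨ (i = j' ∧ j = i')
    · simp only [if_pos hpat]
      have hone : ∀ k : Fin d',
          (2:ℂ)^d * (((c:ℂ) * c) * (V i k * star (V i' k) * (W j k * star (W j' k))))
          = V i k * star (V i' k) * (W j k * star (W j' k)) := by
        intro k
        rw [← mul_assoc, mul_comm ((2:ℂ)^d), hc, one_mul]
      rw [Finset.sum_congr rfl fun k _ => hone k]
      by_cases h1 : i = i' ∧ j = j'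
      · obtain ⟨rfl, rfl⟩ := h1
        have hx : X3 A B C (i, j) (i, j) = A i j := by simp [X3]
        rw [hx, hA]
        simp only [Matrix.mul_apply, Matrix.hadamard_apply, Matrix.conjTranspose_apply,
          Matrix.map_apply]
        exact Finset.sum_congr rfl fun k _ => by simp only [star_mul', star_star]; ring
      · by_cases h2 : i = j ∧ i' = j'
        · obtain ⟨hj, hj'⟩ := h2
          subst hj; subst hj'
          have hx : X3 A B C (i, i) (i', i') = B i i' := by
            have hne : i ≠ i' := fun h => h1 ⟨h, h⟩
            simp [X3, hne]
          rw [hx, hB]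
          simp only [Matrix.mul_apply, Matrix.hadamard_apply, Matrix.conjTranspose_apply,
            Matrix.map_apply]
          exact Finset.sum_congr rfl fun k _ => by simp only [star_mul', star_star]; ring
        · have h3 : i = j' ∧ j = i' := (hpat.resolve_left h1).resolve_left h2
          obtain ⟨hj', hi'⟩ := h3
          subst hj'; subst hi'
          have hx : X3 A B C (i, j) (j, i) = C i j := by
            have t1 : ¬(i = j ∧ j = i) := fun h => h1 ⟨h.1, h.2⟩
            simp [X3, t1]
          rw [hx, hC]
          simp only [Matrix.mul_apply, Matrix.hadamard_apply, Matrix.conjTranspose_apply,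
            Matrix.map_apply]
          exact Finset.sum_congr rfl fun k _ => by simp only [star_mul', star_star]; ring
    · simp only [if_neg hpat, zero_mul, Finset.sum_const_zero]
      push_neg at hpat
      have hx : X3 A B C (i, j) (i', j') = 0 := by
        simp only [X3, Matrix.of_apply]
        rw [if_neg (fun h : i = i' ∧ j = j' => hpat.1 h.1 h.2),
          if_neg (fun h : i = j ∧ i' = j' => hpat.2.1 h.1 h.2),
          if_neg (fun h : i = j' ∧ j = i' => hpat.2.2 h.1 h.2)]
      rw [hx]
end

section
/- Let A, B be d×d complex matrices with equal diagonals. Then the following are equivalent: (i) X^{(1)}_{(A,B)} ∈ M_d(ℂ)⊗M_d(ℂ) is separable; (ii) X^{(2)}_{(A,B)} ∈ M_d(ℂ)⊗M_d(ℂ) is separable; (iii) the pair (A,B) is pairwise completely positive (PCP). -/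
open Matrix Kronecker

/-- The LDUI matrix `X^{(1)}_{(A,B)} = X^{(3)}_{(A, diag A, B)}`. -/
def X1 {d : ℕ} (A B : Matrix (Fin d) (Fin d) ℂ) :
    Matrix (Fin d × Fin d) (Fin d × Fin d) ℂ :=
  X3 A (Matrix.diagonal fun i => A i i) B

/-- The CLDUI matrix `X^{(2)}_{(A,B)} = X^{(3)}_{(A, B, diag A)}`. -/
def X2 {d : ℕ} (A B : Matrix (Fin d) (Fin d) ℂ) :
    Matrix (Fin d × Fin d) (Fin d × Fin d) ℂ :=
  X3 A B (Matrix.diagonal fun i => A i i)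

/-- Pairwise complete positivity of a pair `(A,B)`. -/
def PCP {d : ℕ} (A B : Matrix (Fin d) (Fin d) ℂ) : Prop :=
  ∃ (d' : ℕ) (V W : Matrix (Fin d) (Fin d') ℂ),
    A = (V ⊙ V.map star) * (W ⊙ W.map star)ᴴ ∧
    B = (V ⊙ W) * (V ⊙ W)ᴴ

/-!
Transposing the second tensor factor maps each `(v v^*) ⊗ (w w^*)` to `(v v^*) ⊗ (w̄ w̄^*)` and
exchanges `X^{(1)}` and `X^{(2)}`, so (i) ⟺ (ii). If `X^{(2)}_{(A,B)} = ∑_k (v_k v_k^*) ⊗ (w_k w_k^*)`,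
the matrices `V`, `W` with columns `v_k`, `w_k` are PCP factors of `(A,B)`: the entries
`⟨ij|X|ij⟩` and `⟨ii|X|jj⟩` of the sum are those of `(V ⊙ V̄)(W ⊙ W̄)^*` and `(V ⊙ W)(V ⊙ W)^*`.
Conversely, given PCP factors, `∑_k (V_k V_k^*) ⊗ (W_k W_k^*)` is separable and has the right
entries at those positions; averaging it over the conjugations by `U ⊗ Ū`, `U` diagonal with
fourth roots of unity on the diagonal, annihilates all other entries and keeps separability.
-/

open Finset Complex

lemma Multiset.pair_eq_pair_iff {α : Type*} {a b c e : α} :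
    ({a, b} : Multiset α) = {c, e} ↔ (a = c ∧ b = e) ∨ (a = e ∧ b = c) := by
  constructor
  · intro h
    have ha : a ∈ ({c, e} : Multiset α) := h ▸ Multiset.mem_cons_self a _
    rcases Multiset.mem_cons.1 ha with rfl | ha
    · exact .inl ⟨rfl, by simpa using Multiset.cons_inj_right a |>.1 h⟩
    · obtain rfl := Multiset.mem_singleton.1 ha
      rw [Multiset.pair_comm c a] at h
      exact .inr ⟨rfl, by simpa using Multiset.cons_inj_right a |>.1 h⟩
  · rintro (⟨rfl, rfl⟩ | ⟨rfl, rfl⟩)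
    · rfl
    · exact Multiset.pair_comm a b

lemma Multiset.prod_map_eq_prod_pow_count {ι M : Type*} [Fintype ι] [DecidableEq ι]
    [CommMonoid M] (m : Multiset ι) (f : ι → M) :
    (m.map f).prod = ∏ i, f i ^ m.count i := by
  rw [Finset.prod_multiset_map_count]
  exact prod_subset (subset_univ _) fun i _ hi => by
    rw [Multiset.count_eq_zero.2 (by simpa using hi), pow_zero]

lemma sum_fin_four_pow_I_pow_mul_neg_I_pow {e g : ℕ} (he : e ≤ 2) (hg : g ≤ 2) :
    ∑ t : Fin 4, (I ^ e * (-I) ^ g) ^ (t : ℕ) = if e = g then 4 else 0 := by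
  interval_cases e <;> interval_cases g <;> simp [Fin.sum_univ_four, pow_succ]

lemma sum_I_pow_mul_neg_I_pow {ι : Type*} [Fintype ι] [DecidableEq ι] (a b c e : ι) :
    ∑ θ : ι → Fin 4, I ^ ((θ a : ℕ) + θ b) * (-I) ^ ((θ c : ℕ) + θ e) =
      if ({a, b} : Multiset ι) = {c, e} then 4 ^ Fintype.card ι else 0 := by
  have hpair : ∀ (z : ℂ) (θ : ι → Fin 4) (x y : ι),
      z ^ ((θ x : ℕ) + θ y) = ∏ i, (z ^ ({x, y} : Multiset ι).count i) ^ (θ i : ℕ) := by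
    intro z θ x y
    simp_rw [← pow_mul, mul_comm _ (θ _ : ℕ), pow_mul]
    rw [← Multiset.prod_map_eq_prod_pow_count]
    simp [pow_add]
  have hcount : ∀ (x y i : ι), ({x, y} : Multiset ι).count i ≤ 2 := fun x y i =>
    (Multiset.count_le_card _ _).trans_eq rfl
  simp_rw [hpair, ← prod_mul_distrib, ← mul_pow]
  rw [← Fintype.prod_sum fun i (t : Fin 4) =>
    (I ^ ({a, b} : Multiset ι).count i * (-I) ^ ({c, e} : Multiset ι).count i) ^ (t : ℕ)]
  simp_rw [sum_fin_four_pow_I_pow_mul_neg_I_pow (hcount _ _ _) (hcount _ _ _), prod_ite_zero,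
    prod_const, card_univ, mem_univ, true_implies, ← Multiset.ext]

section ProductSum

variable {ι κ : Type*} [Fintype κ]

def productSum (V W : Matrix ι κ ℂ) : Matrix (ι × ι) (ι × ι) ℂ :=
  ∑ k, vecMulVec (Vᵀ k) (star (Vᵀ k)) ⊗ₖ vecMulVec (Wᵀ k) (star (Wᵀ k))

lemma productSum_apply (V W : Matrix ι κ ℂ) (p q : ι × ι) :
    productSum V W p q = ∑ k, V p.1 k * star (V q.1 k) * (W p.2 k * star (W q.2 k)) := by
  simp [productSum, Matrix.sum_apply, vecMulVec_apply]

lemma productSum_apply_self (V W : Matrix ι κ ℂ) (i j : ι) :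
    productSum V W (i, j) (i, j) = ((V ⊙ V.map star) * (W ⊙ W.map star)ᴴ) i j := by
  simp only [productSum_apply, mul_apply, hadamard_apply, conjTranspose_apply, map_apply,
    star_mul', star_star]
  exact sum_congr rfl fun k _ => by ring

lemma productSum_apply_diag (V W : Matrix ι κ ℂ) (i j : ι) :
    productSum V W (i, i) (j, j) = ((V ⊙ W) * (V ⊙ W)ᴴ) i j := by
  simp only [productSum_apply, mul_apply, hadamard_apply, conjTranspose_apply, star_mul']
  exact sum_congr rfl fun k _ => by ring

end ProductSum

section PartialTranspose

variable {ι ι' κ α : Type*}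

def partialTranspose (X : Matrix (ι × ι') (ι × ι') α) : Matrix (ι × ι') (ι × ι') α :=
  of fun p q => X (p.1, q.2) (q.1, p.2)

@[simp]
lemma partialTranspose_partialTranspose (X : Matrix (ι × ι') (ι × ι') α) :
    partialTranspose (partialTranspose X) = X :=
  rfl

lemma partialTranspose_productSum [Fintype κ] (V W : Matrix ι κ ℂ) :
    partialTranspose (productSum V W) = productSum V (W.map star) := by
  ext p q
  simp only [partialTranspose, of_apply, productSum_apply, map_apply, star_star]
  exact sum_congr rfl fun k _ => by ring

end PartialTranspose

section Twirl

variable {ι : Type*} [DecidableEq ι]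

/-- The average of `(U ⊗ Ū) X (U ⊗ Ū)ᴴ` over diagonal unitaries `U`: it keeps the entry
`⟨p₁p₂|X|q₁q₂⟩` exactly when its phase `u_{p₁} ū_{p₂} ū_{q₁} u_{q₂}` is identically `1`. -/
def cldTwirl (X : Matrix (ι × ι) (ι × ι) ℂ) : Matrix (ι × ι) (ι × ι) ℂ :=
  of fun p q => if ({p.1, q.2} : Multiset ι) = {q.1, p.2} then X p q else 0

lemma cldTwirl_productSum [Fintype ι] {κ : Type*} [Fintype κ] (V W : Matrix ι κ ℂ) :
    cldTwirl (productSum V W) = productSum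
      (of fun i (kθ : κ × (ι → Fin 4)) => (2⁻¹ : ℂ) ^ Fintype.card ι * I ^ (kθ.2 i : ℕ) * V i kθ.1)
      (of fun i kθ => (-I) ^ (kθ.2 i : ℕ) * W i kθ.1) := by
  ext ⟨p₁, p₂⟩ ⟨q₁, q₂⟩
  have hstar : star I = -I := by simp
  have hterm : ∀ (k : κ) (θ : ι → Fin 4),
      (2⁻¹ : ℂ) ^ Fintype.card ι * I ^ (θ p₁ : ℕ) * V p₁ k *
          star ((2⁻¹ : ℂ) ^ Fintype.card ι * I ^ (θ q₁ : ℕ) * V q₁ k) *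
        ((-I) ^ (θ p₂ : ℕ) * W p₂ k * star ((-I) ^ (θ q₂ : ℕ) * W q₂ k)) =
      4⁻¹ ^ Fintype.card ι * (I ^ ((θ p₁ : ℕ) + θ q₂) * (-I) ^ ((θ q₁ : ℕ) + θ p₂)) *
        (V p₁ k * star (V q₁ k) * (W p₂ k * star (W q₂ k))) := by
    intro k θ
    have h4 : (4⁻¹ : ℂ) = 2⁻¹ * 2⁻¹ := by norm_num
    simp only [star_mul', star_pow, star_neg, hstar, neg_neg, star_inv₀, star_ofNat, h4, mul_pow,
      pow_add]
    ring
  simp only [cldTwirl, of_apply, productSum_apply, Fintype.sum_prod_type, hterm, ← sum_mul,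
    ← mul_sum, sum_I_pow_mul_neg_I_pow]
  split_ifs <;> simp

end Twirl

section LocalDiagonalInvariant

variable {d : ℕ}

lemma separable_productSum {κ : Type*} [Fintype κ] (V W : Matrix (Fin d) κ ℂ) :
    Separable (productSum V W) := by
  let e := Fintype.equivFin κ
  exact ⟨Fintype.card κ, fun k => Vᵀ (e.symm k), fun k => Wᵀ (e.symm k),
    (Fintype.sum_equiv e.symm _ _ fun _ => rfl).symm⟩

lemma Separable.exists_eq_productSum {X : Matrix (Fin d × Fin d) (Fin d × Fin d) ℂ}
    (h : Separable X) : ∃ (n : ℕ) (V W : Matrix (Fin d) (Fin n) ℂ), X = productSum V W := by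
  obtain ⟨n, v, w, rfl⟩ := h
  exact ⟨n, (of v)ᵀ, (of w)ᵀ, rfl⟩

lemma Separable.partialTranspose {X : Matrix (Fin d × Fin d) (Fin d × Fin d) ℂ}
    (h : Separable X) : Separable (partialTranspose X) := by
  obtain ⟨n, V, W, rfl⟩ := h.exists_eq_productSum
  rw [partialTranspose_productSum]
  exact separable_productSum _ _

lemma Separable.cldTwirl {X : Matrix (Fin d × Fin d) (Fin d × Fin d) ℂ}
    (h : Separable X) : Separable (cldTwirl X) := by
  obtain ⟨n, V, W, rfl⟩ := h.exists_eq_productSum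
  rw [cldTwirl_productSum]
  exact separable_productSum _ _

lemma partialTranspose_X2 (A B : Matrix (Fin d) (Fin d) ℂ) :
    partialTranspose (X2 A B) = X1 A B := by
  ext ⟨p₁, p₂⟩ ⟨q₁, q₂⟩
  simp only [partialTranspose, X1, X2, X3, of_apply]
  split_ifs <;> first | rfl | grind [diagonal_apply]

lemma partialTranspose_X1 (A B : Matrix (Fin d) (Fin d) ℂ) :
    partialTranspose (X1 A B) = X2 A B := by
  rw [← partialTranspose_X2, partialTranspose_partialTranspose]

lemma cldTwirl_eq_X2 (X : Matrix (Fin d × Fin d) (Fin d × Fin d) ℂ) :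
    cldTwirl X = X2 (of fun i j => X (i, j) (i, j)) (of fun i j => X (i, i) (j, j)) := by
  ext ⟨p₁, p₂⟩ ⟨q₁, q₂⟩
  simp only [cldTwirl, X2, X3, of_apply, Multiset.pair_eq_pair_iff]
  split_ifs <;> first | rfl | grind [diagonal_apply]

lemma X2_apply_self (A B : Matrix (Fin d) (Fin d) ℂ) (i j : Fin d) :
    X2 A B (i, j) (i, j) = A i j := by
  simp [X2, X3]

lemma X2_apply_diag {A B : Matrix (Fin d) (Fin d) ℂ} (hdiag : ∀ i, A i i = B i i)
    (i j : Fin d) : X2 A B (i, i) (j, j) = B i j := by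
  by_cases h : i = j
  · subst h
    simp [X2, X3, hdiag]
  · simp [X2, X3, h]

lemma PCP.of_separable_X2 {A B : Matrix (Fin d) (Fin d) ℂ} (hdiag : ∀ i, A i i = B i i)
    (h : Separable (X2 A B)) : PCP A B := by
  obtain ⟨n, V, W, hX⟩ := h.exists_eq_productSum
  refine ⟨n, V, W, ?_, ?_⟩ <;> ext i j
  · rw [← productSum_apply_self, ← hX, X2_apply_self]
  · rw [← productSum_apply_diag, ← hX, X2_apply_diag hdiag]

lemma PCP.separable_X2 {A B : Matrix (Fin d) (Fin d) ℂ} (h : PCP A B) :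
    Separable (X2 A B) := by
  obtain ⟨n, V, W, rfl, rfl⟩ := h
  have hX2 : X2 ((V ⊙ V.map star) * (W ⊙ W.map star)ᴴ) ((V ⊙ W) * (V ⊙ W)ᴴ) =
      cldTwirl (productSum V W) := by
    rw [cldTwirl_eq_X2]
    congr 1 <;> ext i j
    exacts [(productSum_apply_self V W i j).symm, (productSum_apply_diag V W i j).symm]
  exact hX2 ▸ (separable_productSum V W).cldTwirl

end LocalDiagonalInvariant

theorem stmt2 {d : ℕ} (A B : Matrix (Fin d) (Fin d) ℂ)
    (hdiag : ∀ i, A i i = B i i) :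
    [Separable (X1 A B), Separable (X2 A B), PCP A B].TFAE := by
  tfae_have 1 → 2 := fun h => partialTranspose_X1 A B ▸ h.partialTranspose
  tfae_have 2 → 1 := fun h => partialTranspose_X2 A B ▸ h.partialTranspose
  tfae_have 2 → 3 := PCP.of_separable_X2 hdiag
  tfae_have 3 → 2 := PCP.separable_X2
  tfae_finish
end

section
/- Let A, B be d×d complex matrices with equal diagonals. Then the following six statements are equivalent: (i) (A,B) is PCP; (ii) (A,Bᵀ) is PCP; (iii) (A,B,B) is TCP; (iv) (A,B,Bᵀ) is TCP; (v) (A,Bᵀ,B) is TCP; (vi) (A,Bᵀ,Bᵀ) is TCP. -/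
/-!
Every complex number factors as `z = u |z|` with `|u| = 1`. Replacing the data `(V, W)` by
`(V ⊙ U, W ⊙ Ū)` for an entrywise unimodular `U` leaves `V ⊙ V̄`, `W ⊙ W̄` and `V ⊙ W` unchanged
and multiplies `V ⊙ W̄` by `U ⊙ U`. Taking `U` the phase of `W`, resp. of `V̄`, turns `V ⊙ W̄` into
`V ⊙ W`, resp. `V̄ ⊙ W̄`, whose Gram matrices are `B` and `Bᵀ`. Conjugating `V` and `W` fixes `A`
and swaps `B` with `Bᵀ`.
-/

open Matrix

lemma Complex.exists_star_mul_self_eq_one_and_sq_mul_star (z : ℂ) :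
    ∃ u : ℂ, star u * u = 1 ∧ u ^ 2 * star z = z := by
  rcases eq_or_ne z 0 with rfl | hz
  · exact ⟨1, by simp⟩
  have hnorm : (‖z‖ : ℂ) ≠ 0 := by exact_mod_cast norm_ne_zero_iff.mpr hz
  have hsq : z * star z = ‖z‖ ^ 2 := Complex.mul_conj' z
  refine ⟨z / ‖z‖, ?_, ?_⟩
  · rw [star_div₀, Complex.star_def, Complex.conj_ofReal, div_mul_div_comm, Complex.conj_mul']
    field_simp
  · rw [div_pow, div_mul_eq_mul_div, div_eq_iff (pow_ne_zero 2 hnorm)]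
    linear_combination z * hsq

lemma Matrix.map_star_mul_conjTranspose_map_star {m n R : Type*} [Fintype n] [CommSemiring R]
    [StarRing R] (M : Matrix m n R) :
    M.map star * (M.map star)ᴴ = (M * Mᴴ)ᵀ := by
  rw [transpose_mul, conjTranspose_transpose]
  congr 1
  ext
  simp

section

variable {d : ℕ} {A B C : Matrix (Fin d) (Fin d) ℂ}

lemma TCP.pcp (h : TCP A B C) : PCP A B :=
  let ⟨d', V, W, hA, hB, _⟩ := h
  ⟨d', V, W, hA, hB⟩

lemma PCP.transpose (h : PCP A B) : PCP A Bᵀ := by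
  obtain ⟨d', V, W, hA, hB⟩ := h
  refine ⟨d', V.map star, W.map star, ?_, ?_⟩
  · have hstar (M : Matrix (Fin d) (Fin d') ℂ) :
        M.map star ⊙ (M.map star).map star = M ⊙ M.map star := by
      ext; simp [mul_comm]
    rw [hstar, hstar, hA]
  · have hVW : V.map star ⊙ W.map star = (V ⊙ W).map star := by
      ext; simp
    rw [hVW, map_star_mul_conjTranspose_map_star, hB]

lemma tcp_hadamard_unimodular {d' : ℕ} (V W U : Matrix (Fin d) (Fin d') ℂ)
    (hU : ∀ i j, star (U i j) * U i j = 1) :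
    TCP ((V ⊙ V.map star) * (W ⊙ W.map star)ᴴ) ((V ⊙ W) * (V ⊙ W)ᴴ)
      ((V ⊙ W.map star ⊙ U ⊙ U) * (V ⊙ W.map star ⊙ U ⊙ U)ᴴ) := by
  have hV : (V ⊙ U) ⊙ (V ⊙ U).map star = V ⊙ V.map star := by
    ext i j
    simp only [hadamard_apply, map_apply, star_mul']
    linear_combination V i j * star (V i j) * hU i j
  have hW : (W ⊙ U.map star) ⊙ (W ⊙ U.map star).map star = W ⊙ W.map star := by
    ext i j
    simp only [hadamard_apply, map_apply, star_mul', star_star]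
    linear_combination W i j * star (W i j) * hU i j
  have hVW : (V ⊙ U) ⊙ (W ⊙ U.map star) = V ⊙ W := by
    ext i j
    simp only [hadamard_apply, map_apply]
    linear_combination V i j * W i j * hU i j
  have hVW' : (V ⊙ U) ⊙ (W ⊙ U.map star).map star = V ⊙ W.map star ⊙ U ⊙ U := by
    ext i j
    simp only [hadamard_apply, map_apply, star_mul', star_star]
    ring
  exact ⟨d', V ⊙ U, W ⊙ U.map star, by rw [hV, hW], by rw [hVW], by rw [hVW']⟩

lemma PCP.tcp_self (h : PCP A B) : TCP A B B := by
  obtain ⟨d', V, W, rfl, rfl⟩ := h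
  choose u hu_unit hu_sq using Complex.exists_star_mul_self_eq_one_and_sq_mul_star
  have hphase : V ⊙ W.map star ⊙ W.map u ⊙ W.map u = V ⊙ W := by
    ext i j
    simp only [hadamard_apply, map_apply]
    linear_combination V i j * hu_sq (W i j)
  simpa only [hphase] using tcp_hadamard_unimodular V W (W.map u) fun i j => hu_unit (W i j)

lemma PCP.tcp_transpose (h : PCP A B) : TCP A B Bᵀ := by
  obtain ⟨d', V, W, rfl, rfl⟩ := h
  choose u hu_unit hu_sq using Complex.exists_star_mul_self_eq_one_and_sq_mul_star
  set U := V.map (u ∘ star)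
  have hphase : V ⊙ W.map star ⊙ U ⊙ U = (V ⊙ W).map star := by
    ext i j
    simp only [U, hadamard_apply, map_apply, Function.comp_apply, star_mul']
    have hu_V := hu_sq (star (V i j))
    rw [star_star] at hu_V
    linear_combination star (W i j) * hu_V
  have hC := tcp_hadamard_unimodular V W U fun i j => hu_unit (star (V i j))
  rwa [hphase, map_star_mul_conjTranspose_map_star] at hC

end

theorem stmt3_general {d : ℕ} (A B : Matrix (Fin d) (Fin d) ℂ) :
    [PCP A B, PCP A Bᵀ, TCP A B B, TCP A B Bᵀ, TCP A Bᵀ B, TCP A Bᵀ Bᵀ].TFAE := by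
  tfae_have 1 → 2 := PCP.transpose
  tfae_have 2 → 1 := fun h => by simpa using h.transpose
  tfae_have 1 → 3 := PCP.tcp_self
  tfae_have 3 → 1 := TCP.pcp
  tfae_have 1 → 4 := PCP.tcp_transpose
  tfae_have 4 → 1 := TCP.pcp
  tfae_have 2 → 5 := fun h => by simpa using h.tcp_transpose
  tfae_have 5 → 2 := TCP.pcp
  tfae_have 2 → 6 := PCP.tcp_self
  tfae_have 6 → 2 := TCP.pcp
  tfae_finish

theorem stmt3 {d : ℕ} (A B : Matrix (Fin d) (Fin d) ℂ)
    (hdiag : ∀ i, A i i = B i i) :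
    [PCP A B, PCP A Bᵀ, TCP A B B, TCP A B Bᵀ, TCP A Bᵀ B, TCP A Bᵀ Bᵀ].TFAE :=
  stmt3_general A B
end

section
/- Let (A,B,C) be a triple of d×d complex matrices with equal diagonals which is triplewise completely positive (TCP). Then ‖A‖₁ − ‖A‖_Tr ≥ 2·Σ_{1 ≤ i < j ≤ d} max(|B_ij|, |C_ij|), where ‖A‖₁ = Σ_{i,j} |A_ij| is the entrywise ℓ¹ norm and ‖A‖_Tr = Tr √(A^* A) is the trace (nuclear) norm. -/
open Matrix
open scoped ComplexOrder

/-- The entrywise ℓ¹ norm of a matrix. -/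
noncomputable def entrywiseL1Norm {d : ℕ} (A : Matrix (Fin d) (Fin d) ℂ) : ℝ :=
  ∑ i, ∑ j, ‖A i j‖

/-- The trace (nuclear) norm of a matrix: the trace of the positive semidefinite
square root of `Aᴴ * A`. -/
noncomputable def traceNorm {d : ℕ} (A : Matrix (Fin d) (Fin d) ℂ) : ℝ :=
  (((Matrix.isHermitian_conjTranspose_mul_self A).eigenvectorUnitary.1 *
    diagonal (((↑) : ℝ → ℂ) ∘ Real.sqrt ∘ (Matrix.isHermitian_conjTranspose_mul_self A).eigenvalues) *
    (star (Matrix.isHermitian_conjTranspose_mul_self A).eigenvectorUnitary : Matrix (Fin d) (Fin d) ℂ)).trace).re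

/-!
Write the factorisation column by column: with `x_k = (|V_ik|²)_i` and `y_k = (|W_ik|²)_i`,
`A = ∑_k x_k y_kᵀ` has nonnegative entries, so `‖A‖₁ = ∑_k ‖x_k‖₁ ‖y_k‖₁`, while
`‖A‖_Tr ≤ ∑_k ‖x_k‖₂ ‖y_k‖₂`: the trace norm is `∑ᵢ ‖A vᵢ‖` over an eigenbasis `(vᵢ)` of `Aᴴ A`,
the vectors `A vᵢ` are orthogonal, and Cauchy–Schwarz with Bessel's inequality for the normalised
`A vᵢ` and for the `vᵢ` bounds the contribution of each column.
Both `|B_ij|` and `|C_ij|` are at most `∑_k s_ik s_jk` with `s_ik = |V_ik| |W_ik|`, with equality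
`B_ii = C_ii = ∑_k s_ik²` on the diagonal. The theorem is thus reduced to the per-column inequality
`(∑ aᵢbᵢ)² - ∑ (aᵢbᵢ)² ≤ ‖a‖² ‖b‖² - ‖a²‖ ‖b²‖` for real vectors, which follows from Lagrange's
identity for `(a, b)` and for `(a², b²)`.
-/

open Finset
open scoped InnerProductSpace

section SumOverPairs

variable {ι : Type*} [Fintype ι] [LinearOrder ι]

theorem two_mul_sum_ite_lt {R : Type*} [CommRing R] (F : ι → ι → R)
    (hF : ∀ i j, F i j = F j i) :
    2 * ∑ i, ∑ j, (if i < j then F i j else 0) = ∑ i, ∑ j, F i j - ∑ i, F i i := by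
  have hsplit : ∀ i j, F i j = (if i < j then F i j else 0) + (if j < i then F j i else 0) +
      (if i = j then F i j else 0) := by
    intro i j
    rcases lt_trichotomy i j with h | rfl | h
    · simp [h, h.not_gt, h.ne]
    · simp
    · simp [h, h.not_gt, h.ne', hF i j]
  have hlower : ∑ i, ∑ j, (if j < i then F j i else 0) =
      ∑ i, ∑ j, (if i < j then F i j else 0) := sum_comm
  have hdiag : ∑ i, ∑ j, (if i = j then F i j else 0) = ∑ i, F i i := by simp
  have hfull : ∑ i, ∑ j, F i j = ∑ i, ∑ j, (if i < j then F i j else 0) +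
      ∑ i, ∑ j, (if j < i then F j i else 0) + ∑ i, ∑ j, (if i = j then F i j else 0) := by
    simp only [← sum_add_distrib]
    exact sum_congr rfl fun i _ => sum_congr rfl fun j _ => hsplit i j
  rw [hfull, hlower, hdiag]
  ring

theorem single_le_sum_ite_lt {M : Type*} [AddCommMonoid M] [PartialOrder M]
    [IsOrderedAddMonoid M] {F : ι → ι → M} (hF : ∀ i j, 0 ≤ F i j) {i j : ι} (hij : i < j) :
    F i j ≤ ∑ i, ∑ j, if i < j then F i j else 0 := by
  have hF' : ∀ i j, 0 ≤ if i < j then F i j else 0 := fun i j => by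
    split_ifs
    exacts [hF i j, le_rfl]
  calc F i j = if i < j then F i j else 0 := (if_pos hij).symm
    _ ≤ ∑ j, if i < j then F i j else 0 := single_le_sum (fun j _ => hF' i j) (mem_univ j)
    _ ≤ ∑ i, ∑ j, if i < j then F i j else 0 :=
      single_le_sum (f := fun i => ∑ j, if i < j then F i j else 0)
        (fun i _ => sum_nonneg fun j _ => hF' i j) (mem_univ i)

theorem sum_sq_mul_sum_sq_sub_sq_sum_mul {R : Type*} [Field R] [CharZero R] (a b : ι → R) :
    (∑ i, a i ^ 2) * (∑ i, b i ^ 2) - (∑ i, a i * b i) ^ 2 =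
      ∑ i, ∑ j, if i < j then (a i * b j - a j * b i) ^ 2 else 0 := by
  have hpairs := two_mul_sum_ite_lt (fun i j => (a i * b j - a j * b i) ^ 2) fun i j => by ring
  have hfull : ∑ i, ∑ j, (a i * b j - a j * b i) ^ 2 =
      2 * ((∑ i, a i ^ 2) * (∑ i, b i ^ 2) - (∑ i, a i * b i) ^ 2) := by
    calc ∑ i, ∑ j, (a i * b j - a j * b i) ^ 2
        = ∑ i, ∑ j, (a i ^ 2 * b j ^ 2 + a j ^ 2 * b i ^ 2 - 2 * (a i * b i * (a j * b j))) :=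
          sum_congr rfl fun i _ => sum_congr rfl fun j _ => by ring
      _ = _ := by
          simp only [sum_add_distrib, sum_sub_distrib, ← mul_sum, ← sum_mul]
          ring
  have hdiag : ∑ i, (a i * b i - a i * b i) ^ 2 = 0 := by simp
  rw [hfull, hdiag, sub_zero] at hpairs
  exact (mul_left_cancel₀ two_ne_zero hpairs).symm

theorem sum_pow_four_mul_sum_pow_four_le (a b : ι → ℝ) :
    (∑ i, a i ^ 4) * (∑ i, b i ^ 4) ≤
      (∑ i, (a i * b i) ^ 2 + ∑ i, ∑ j, if i < j then (a i * b j - a j * b i) ^ 2 else 0) ^ 2 := by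
  set S := ∑ i, (a i * b i) ^ 2
  set L := ∑ i, ∑ j, if i < j then (a i * b j - a j * b i) ^ 2 else 0
  have hS : 0 ≤ S := sum_nonneg fun i _ => sq_nonneg _
  have hL : 0 ≤ L := sum_nonneg fun i _ => sum_nonneg fun j _ => by positivity
  have hlagrange : (∑ i, a i ^ 4) * (∑ i, b i ^ 4) - S ^ 2 =
      ∑ i, ∑ j, if i < j then ((a i * b j) ^ 2 - (a j * b i) ^ 2) ^ 2 else 0 := by
    have := sum_sq_mul_sum_sq_sub_sq_sum_mul (fun i => a i ^ 2) (fun i => b i ^ 2)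
    simpa only [← pow_mul, ← mul_pow, Nat.reduceMul] using this
  -- `(a_i b_j)² - (a_j b_i)² = u v` with `u = a_i b_j - a_j b_i`, `u² ≤ L` and
  -- `v² = u² + 4 (a_i b_i)(a_j b_j) ≤ L + 2 S`
  have hterm : ∀ i j, i < j → ((a i * b j) ^ 2 - (a j * b i) ^ 2) ^ 2 ≤
      (L + 2 * S) * (a i * b j - a j * b i) ^ 2 := by
    intro i j hij
    have hu : (a i * b j - a j * b i) ^ 2 ≤ L :=
      single_le_sum_ite_lt (F := fun i j => (a i * b j - a j * b i) ^ 2)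
        (fun _ _ => sq_nonneg _) hij
    have hpair : (a i * b i) ^ 2 + (a j * b j) ^ 2 ≤ S := by
      have := sum_le_sum_of_subset_of_nonneg (subset_univ {i, j})
        (f := fun k => (a k * b k) ^ 2) fun _ _ _ => sq_nonneg _
      rwa [sum_pair hij.ne] at this
    have hv : (a i * b j + a j * b i) ^ 2 ≤ L + 2 * S := by
      nlinarith [sq_nonneg (a i * b i - a j * b j)]
    calc ((a i * b j) ^ 2 - (a j * b i) ^ 2) ^ 2
        = (a i * b j + a j * b i) ^ 2 * (a i * b j - a j * b i) ^ 2 := by ring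
      _ ≤ (L + 2 * S) * (a i * b j - a j * b i) ^ 2 := by gcongr
  have hsum : (∑ i, ∑ j, if i < j then ((a i * b j) ^ 2 - (a j * b i) ^ 2) ^ 2 else 0) ≤
      (L + 2 * S) * L := by
    rw [mul_sum]
    refine sum_le_sum fun i _ => ?_
    rw [mul_sum]
    refine sum_le_sum fun j _ => ?_
    split_ifs with hij
    exacts [hterm i j hij, by simp]
  nlinarith

theorem sq_sum_mul_sub_sum_sq_le (a b : ι → ℝ) :
    (∑ i, a i * b i) ^ 2 - ∑ i, (a i * b i) ^ 2 ≤
      (∑ i, a i ^ 2) * (∑ i, b i ^ 2) - √(∑ i, a i ^ 4) * √(∑ i, b i ^ 4) := by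
  have hlagrange := sum_sq_mul_sum_sq_sub_sq_sum_mul a b
  have hsqrt : √(∑ i, a i ^ 4) * √(∑ i, b i ^ 4) ≤ ∑ i, (a i * b i) ^ 2 +
      ∑ i, ∑ j, if i < j then (a i * b j - a j * b i) ^ 2 else 0 := by
    rw [← Real.sqrt_mul (sum_nonneg fun i _ => by positivity)]
    refine Real.sqrt_le_iff.mpr ⟨?_, sum_pow_four_mul_sum_pow_four_le a b⟩
    exact add_nonneg (sum_nonneg fun i _ => sq_nonneg _)
      (sum_nonneg fun i _ => sum_nonneg fun j _ => by positivity)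
  linarith

end SumOverPairs

section NuclearBound

variable {𝕜 E ι κ : Type*} [RCLike 𝕜] [NormedAddCommGroup E] [InnerProductSpace 𝕜 E]
  [Fintype ι] [Fintype κ]

theorem sum_norm_inner_inv_norm_smul_sq_le {w : ι → E}
    (hw : Pairwise fun i j => ⟪w i, w j⟫_𝕜 = 0) (z : E) :
    ∑ i, ‖⟪(‖w i‖⁻¹ : 𝕜) • w i, z⟫_𝕜‖ ^ 2 ≤ ‖z‖ ^ 2 := by
  classical
  let s := univ.filter fun i => w i ≠ 0
  have hu : Orthonormal 𝕜 fun i : s => (‖w i‖⁻¹ : 𝕜) • w i := by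
    refine ⟨fun i => norm_smul_inv_norm (mem_filter.mp i.2).2, fun i j hij => ?_⟩
    simp [inner_smul_left, inner_smul_right, hw (Subtype.coe_ne_coe.mpr hij)]
  calc ∑ i, ‖⟪(‖w i‖⁻¹ : 𝕜) • w i, z⟫_𝕜‖ ^ 2
      = ∑ i ∈ s, ‖⟪(‖w i‖⁻¹ : 𝕜) • w i, z⟫_𝕜‖ ^ 2 :=
        (sum_filter_of_ne (p := fun i => w i ≠ 0) fun i _ hne h0 => hne (by simp [h0])).symm
    _ = ∑ i : s, ‖⟪(‖w i‖⁻¹ : 𝕜) • w i, z⟫_𝕜‖ ^ 2 := (sum_coe_sort s _).symm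
    _ ≤ ‖z‖ ^ 2 := hu.sum_inner_products_le z

theorem sum_norm_le_sum_norm_mul_norm {v : ι → E} (hv : Orthonormal 𝕜 v) {w : ι → E}
    (hw : Pairwise fun i j => ⟪w i, w j⟫_𝕜 = 0) (p q : κ → E)
    (hwpq : ∀ i, w i = ∑ k, ⟪q k, v i⟫_𝕜 • p k) :
    ∑ i, ‖w i‖ ≤ ∑ k, ‖p k‖ * ‖q k‖ := by
  set u := fun i => (‖w i‖⁻¹ : 𝕜) • w i with hu
  have hnorm : ∀ i, ‖w i‖ = RCLike.re ⟪u i, w i⟫_𝕜 := fun i => by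
    rcases eq_or_ne (w i) 0 with h0 | h0
    · simp [h0]
    · rw [hu, inner_smul_left, inner_self_eq_norm_sq_to_K, map_inv₀, RCLike.conj_ofReal]
      norm_cast
      field_simp
  have hbessel_u : ∀ z, √(∑ i, ‖⟪u i, z⟫_𝕜‖ ^ 2) ≤ ‖z‖ := fun z =>
    Real.sqrt_le_iff.mpr ⟨norm_nonneg z, sum_norm_inner_inv_norm_smul_sq_le hw z⟩
  have hbessel_v : ∀ z, √(∑ i, ‖⟪v i, z⟫_𝕜‖ ^ 2) ≤ ‖z‖ := fun z =>
    Real.sqrt_le_iff.mpr ⟨norm_nonneg z, hv.sum_inner_products_le z⟩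
  calc ∑ i, ‖w i‖ = ∑ i, ∑ k, RCLike.re (⟪q k, v i⟫_𝕜 * ⟪u i, p k⟫_𝕜) := by
        refine sum_congr rfl fun i _ => ?_
        rw [hnorm, hwpq, inner_sum, map_sum]
        simp only [inner_smul_right]
    _ ≤ ∑ i, ∑ k, ‖⟪u i, p k⟫_𝕜‖ * ‖⟪v i, q k⟫_𝕜‖ := by
        refine sum_le_sum fun i _ => sum_le_sum fun k _ => ?_
        refine (RCLike.re_le_norm _).trans_eq ?_
        rw [norm_mul, norm_inner_symm, mul_comm]
    _ = ∑ k, ∑ i, ‖⟪u i, p k⟫_𝕜‖ * ‖⟪v i, q k⟫_𝕜‖ := sum_comm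
    _ ≤ ∑ k, ‖p k‖ * ‖q k‖ := by
        refine sum_le_sum fun k _ => (Real.sum_mul_le_sqrt_mul_sqrt _ _ _).trans ?_
        exact mul_le_mul (hbessel_u _) (hbessel_v _) (Real.sqrt_nonneg _) (norm_nonneg _)

end NuclearBound

theorem traceNorm_eq_sum_sqrt_eigenvalues {d : ℕ} (A : Matrix (Fin d) (Fin d) ℂ) :
    traceNorm A = ∑ i, √((isHermitian_conjTranspose_mul_self A).eigenvalues i) := by
  rw [traceNorm, trace_mul_cycle, Unitary.coe_star_mul_self, one_mul, trace_diagonal,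
    Complex.re_sum]
  simp

theorem inner_toLp_mulVec_toLp_mulVec {n : Type*} [Fintype n] (A : Matrix n n ℂ) (x y : n → ℂ) :
    ⟪WithLp.toLp 2 (A *ᵥ x), WithLp.toLp 2 (A *ᵥ y)⟫_ℂ =
      ⟪WithLp.toLp 2 x, WithLp.toLp 2 ((Aᴴ * A) *ᵥ y)⟫_ℂ := by
  simp only [EuclideanSpace.inner_toLp_toLp]
  rw [star_mulVec, dotProduct_comm, ← dotProduct_mulVec, mulVec_mulVec, dotProduct_comm]

theorem traceNorm_mul_conjTranspose_le {d d' : ℕ} (P Q : Matrix (Fin d) (Fin d') ℂ) :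
    traceNorm (P * Qᴴ) ≤ ∑ k, ‖WithLp.toLp 2 (Pᵀ k)‖ * ‖WithLp.toLp 2 (Qᵀ k)‖ := by
  set A := P * Qᴴ
  set hA := isHermitian_conjTranspose_mul_self A
  set w := fun i => WithLp.toLp 2 (A *ᵥ hA.eigenvectorBasis i)
  have hinner : ∀ i j, ⟪w i, w j⟫_ℂ =
      hA.eigenvalues j * ⟪hA.eigenvectorBasis i, hA.eigenvectorBasis j⟫_ℂ := fun i j => by
    rw [inner_toLp_mulVec_toLp_mulVec, hA.mulVec_eigenvectorBasis]
    simp only [EuclideanSpace.inner_eq_star_dotProduct, smul_dotProduct, Complex.real_smul]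
  have hw : Pairwise fun i j => ⟪w i, w j⟫_ℂ = 0 := fun i j hij => by
    change ⟪w i, w j⟫_ℂ = 0
    rw [hinner, hA.eigenvectorBasis.orthonormal.2 hij, mul_zero]
  have hnorm : ∀ i, ‖w i‖ = √(hA.eigenvalues i) := fun i => by
    rw [← Real.sqrt_sq (norm_nonneg (w i)), norm_sq_eq_re_inner (𝕜 := ℂ), hinner,
      orthonormal_iff_ite.mp hA.eigenvectorBasis.orthonormal i i, if_pos rfl, mul_one]
    rfl
  have hwpq : ∀ i, w i =
      ∑ k, ⟪WithLp.toLp 2 (Qᵀ k), hA.eigenvectorBasis i⟫_ℂ • WithLp.toLp 2 (Pᵀ k) := fun i => by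
    simp only [w, A, ← mulVec_mulVec]
    ext j
    simp only [mulVec, dotProduct, conjTranspose_apply, RCLike.star_def, mul_sum, sum_mul,
      EuclideanSpace.inner_eq_star_dotProduct, Pi.star_apply, transpose_apply, WithLp.ofLp_sum,
      WithLp.ofLp_smul, Finset.sum_apply, Pi.smul_apply, smul_eq_mul]
    exact sum_congr rfl fun _ _ => sum_congr rfl fun _ _ => by ring
  rw [traceNorm_eq_sum_sqrt_eigenvalues]
  simp only [← hnorm]
  exact sum_norm_le_sum_norm_mul_norm hA.eigenvectorBasis.orthonormal hw _ _ hwpq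

section GramEntries

variable {m n : Type*}

theorem hadamard_map_star_self_apply (X : Matrix m n ℂ) (i : m) (k : n) :
    (X ⊙ X.map star) i k = ((‖X i k‖ ^ 2 : ℝ) : ℂ) := by
  simp only [hadamard_apply, map_apply, RCLike.star_def, RCLike.mul_conj]
  norm_cast

variable [Fintype n]

theorem norm_mul_conjTranspose_apply_le (X Y : Matrix m n ℂ) (i j : m) :
    ‖(X * Yᴴ) i j‖ ≤ ∑ k, ‖X i k‖ * ‖Y j k‖ := by
  simp only [mul_apply, conjTranspose_apply]
  refine (norm_sum_le _ _).trans_eq (sum_congr rfl fun k _ => ?_)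
  rw [norm_mul, norm_star]

theorem norm_mul_conjTranspose_self_apply_self (X : Matrix m n ℂ) (i : m) :
    ‖(X * Xᴴ) i i‖ = ∑ k, ‖X i k‖ ^ 2 := by
  simp only [mul_apply, conjTranspose_apply, RCLike.star_def, RCLike.mul_conj]
  norm_cast
  exact Real.norm_of_nonneg (sum_nonneg fun k _ => sq_nonneg _)

theorem norm_mul_conjTranspose_self_apply_comm (X : Matrix m n ℂ) (i j : m) :
    ‖(X * Xᴴ) i j‖ = ‖(X * Xᴴ) j i‖ := by
  rw [← (isHermitian_mul_conjTranspose_self X).apply i j, norm_star]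

theorem two_mul_sum_ite_lt_max_norm_le [LinearOrder m] [Fintype m] (X Y : Matrix m n ℂ)
    (s : m → n → ℝ) (hX : ∀ i k, ‖X i k‖ = s i k) (hY : ∀ i k, ‖Y i k‖ = s i k) :
    2 * ∑ i, ∑ j, (if i < j then max ‖(X * Xᴴ) i j‖ ‖(Y * Yᴴ) i j‖ else 0) ≤
      ∑ k, ((∑ i, s i k) ^ 2 - ∑ i, s i k ^ 2) := by
  set G := fun i j => max ‖(X * Xᴴ) i j‖ ‖(Y * Yᴴ) i j‖
  have hG : ∀ i j, G i j ≤ ∑ k, s i k * s j k := fun i j => max_le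
    (by simpa only [hX] using norm_mul_conjTranspose_apply_le X X i j)
    (by simpa only [hY] using norm_mul_conjTranspose_apply_le Y Y i j)
  have hGdiag : ∀ i, G i i = ∑ k, s i k ^ 2 := fun i => by
    simp only [G, norm_mul_conjTranspose_self_apply_self, hX, hY, max_self]
  have hGcomm : ∀ i j, G i j = G j i := fun i j => by
    simp only [G, norm_mul_conjTranspose_self_apply_comm X i j,
      norm_mul_conjTranspose_self_apply_comm Y i j]
  calc 2 * ∑ i, ∑ j, (if i < j then G i j else 0) = ∑ i, ∑ j, G i j - ∑ i, G i i :=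
        two_mul_sum_ite_lt G hGcomm
    _ ≤ ∑ i, ∑ j, ∑ k, s i k * s j k - ∑ i, ∑ k, s i k ^ 2 := by
        simp only [hGdiag]
        gcongr with i _ j _
        exact hG i j
    _ = ∑ k, ((∑ i, s i k) ^ 2 - ∑ i, s i k ^ 2) := by
        rw [sum_sub_distrib, sum_comm (s := univ) (t := univ) (f := fun i k => s i k ^ 2)]
        simp only [sq (∑ i, _), sum_mul_sum]
        rw [(sum_congr rfl fun i _ => sum_comm).trans sum_comm]

end GramEntries

section TCPFactors

variable {d d' : ℕ} (V W : Matrix (Fin d) (Fin d') ℂ)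

theorem entrywiseL1Norm_hadamard_mul_conjTranspose :
    entrywiseL1Norm ((V ⊙ V.map star) * (W ⊙ W.map star)ᴴ) =
      ∑ k, (∑ i, ‖V i k‖ ^ 2) * (∑ i, ‖W i k‖ ^ 2) := by
  have hentry : ∀ i j, ‖((V ⊙ V.map star) * (W ⊙ W.map star)ᴴ) i j‖ =
      ∑ k, ‖V i k‖ ^ 2 * ‖W j k‖ ^ 2 := fun i j => by
    simp only [mul_apply, conjTranspose_apply, hadamard_map_star_self_apply]
    simp only [RCLike.star_def, Complex.conj_ofReal, ← Complex.ofReal_mul, ← Complex.ofReal_sum,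
      Complex.norm_real]
    exact Real.norm_of_nonneg (by positivity)
  simp only [entrywiseL1Norm, hentry, sum_mul_sum]
  exact (sum_congr rfl fun i _ => sum_comm).trans sum_comm

theorem traceNorm_hadamard_mul_conjTranspose_le :
    traceNorm ((V ⊙ V.map star) * (W ⊙ W.map star)ᴴ) ≤
      ∑ k, √(∑ i, ‖V i k‖ ^ 4) * √(∑ i, ‖W i k‖ ^ 4) := by
  refine (traceNorm_mul_conjTranspose_le _ _).trans_eq (sum_congr rfl fun k _ => ?_)
  simp only [EuclideanSpace.norm_eq, transpose_apply, hadamard_map_star_self_apply,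
    Complex.norm_real, Real.norm_eq_abs, sq_abs, ← pow_mul]

end TCPFactors

theorem stmt7_general {d : ℕ} (A B C : Matrix (Fin d) (Fin d) ℂ)
    (h : TCP A B C) :
    2 * ∑ i : Fin d, ∑ j : Fin d,
        (if i < j then max (‖B i j‖) (‖C i j‖) else 0)
      ≤ entrywiseL1Norm A - traceNorm A := by
  obtain ⟨d', V, W, rfl, rfl, rfl⟩ := h
  calc _ ≤ ∑ k, ((∑ i, ‖V i k‖ * ‖W i k‖) ^ 2 - ∑ i, (‖V i k‖ * ‖W i k‖) ^ 2) :=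
        two_mul_sum_ite_lt_max_norm_le (V ⊙ W) (V ⊙ W.map star) (fun i k => ‖V i k‖ * ‖W i k‖)
          (fun i k => norm_mul _ _)
          (fun i k => by simp only [hadamard_apply, map_apply, norm_mul, norm_star])
    _ ≤ ∑ k, ((∑ i, ‖V i k‖ ^ 2) * (∑ i, ‖W i k‖ ^ 2) -
          √(∑ i, ‖V i k‖ ^ 4) * √(∑ i, ‖W i k‖ ^ 4)) :=
        sum_le_sum fun k _ => sq_sum_mul_sub_sum_sq_le _ _
    _ ≤ _ := by
        rw [sum_sub_distrib, entrywiseL1Norm_hadamard_mul_conjTranspose]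
        gcongr
        exact traceNorm_hadamard_mul_conjTranspose_le V W

theorem stmt7 {d : ℕ} (A B C : Matrix (Fin d) (Fin d) ℂ)
    (hdiag : ∀ i, A i i = B i i ∧ A i i = C i i)
    (h : TCP A B C) :
    2 * ∑ i : Fin d, ∑ j : Fin d,
        (if i < j then max (‖B i j‖) (‖C i j‖) else 0)
      ≤ entrywiseL1Norm A - traceNorm A :=
  stmt7_general A B C h
end

section
/- Let A, B be d×d complex matrices with equal diagonals such that every entry of A is a nonnegative real number, B is positive semidefinite, and A_ij·A_ji ≥ |B_ij|² for all i,j ∈ [d]. Then: (i) if B is diagonally dominant, i.e. B_ii ≥ Σ_{j≠i} |B_ij| for every i (the diagonal entries of a positive semidefinite matrix are real), then the comparison matrix M(B) is positive semidefinite; and (ii) if the comparison matrix M(B) is positive semidefinite, then the pair (A,B) is pairwise completely positive (PCP). -/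
/-!
Part (i) is Gershgorin's theorem for the real symmetric matrix `M(B)`.

For part (ii), a positive semidefinite matrix with nonpositive off-diagonal entries admits a
positive vector `t` with `M t ≥ 0`: eliminating the first index leaves a Schur complement of the
same kind. With `c i j = t j / t i * ‖B i j‖` the rows of `B` become dominated,
`∑_{j ≠ i} c i j ≤ B i i`, and `c i j * c j i = ‖B i j‖ ^ 2`. So `B` is a nonnegative diagonal
plus, over ordered pairs `k ≠ l`, the halves of the `2 × 2` blocks `[c k l, B k l; B l k, c l k]`,
and `A` splits alongside with off-diagonal entries `A k l / 2`, `A l k / 2`. Pairwise complete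
positivity is closed under sums, and each pair of `2 × 2` blocks is `PCP`: a single rank-one
term `(v, w)` produces the `B`-block, and the slack left in the `A`-block is a sum of nonnegative
matrix units.
-/

open Matrix
open scoped ComplexOrder

/-- The comparison matrix `M(Z)`: `M(Z)_ii = |Z_ii|`, `M(Z)_ij = −|Z_ij|` for `i ≠ j`. -/
noncomputable def comparisonMatrix {d : ℕ} (Z : Matrix (Fin d) (Fin d) ℂ) :
    Matrix (Fin d) (Fin d) ℝ :=
  Matrix.of fun i j => if i = j then ‖Z i j‖ else -‖Z i j‖

theorem Finset.sum_univ_offDiag {n M : Type*} [Fintype n] [DecidableEq n] [AddCommGroup M]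
    (f : n × n → M) : ∑ p ∈ univ.offDiag, f p = ∑ k, ∑ l, f (k, l) - ∑ k, f (k, k) := by
  rw [eq_sub_iff_add_eq, ← sum_diag, add_comm, ← sum_union (disjoint_diag_offDiag _),
    diag_union_offDiag, univ_product_univ, Fintype.sum_prod_type]

theorem Pi.single_add_single_mul {n K : Type*} [DecidableEq n] [NonUnitalNonAssocSemiring K]
    {k l : n} (hkl : k ≠ l) (x y x' y' : K) :
    (single k x + single l y) * (single k x' + single l y') =
      (single k (x * x') + single l (y * y') : n → K) := by
  ext i
  simp only [mul_apply, add_apply, single_apply]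
  aesop

namespace Matrix

theorem IsHermitian.posSemidef_of_sum_abs_le_diag {n : Type*} [Fintype n] [DecidableEq n]
    {M : Matrix n n ℝ} (hM : M.IsHermitian)
    (h : ∀ i, ∑ j ∈ Finset.univ.erase i, |M i j| ≤ M i i) : M.PosSemidef := by
  refine hM.posSemidef_iff_eigenvalues_nonneg.2 fun i => ?_
  have hμ : Module.End.HasEigenvalue (toLin' M) (hM.eigenvalues i) :=
    Module.End.hasEigenvalue_iff_mem_spectrum.2
      (by rw [spectrum_toLin']; exact hM.eigenvalues_mem_spectrum_real i)
  obtain ⟨k, hk⟩ := eigenvalue_mem_ball hμ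
  rw [Metric.mem_closedBall, Real.dist_eq] at hk
  simp only [Real.norm_eq_abs] at hk
  have := neg_abs_le (hM.eigenvalues i - M k k)
  simp only [Pi.zero_apply]
  linarith [h k]

theorem PosSemidef.sq_apply_le {n : Type*} [Fintype n] [DecidableEq n] {M : Matrix n n ℝ}
    (hM : M.PosSemidef) (i j : n) : M i j ^ 2 ≤ M i i * M j j := by
  have h := (hM.submatrix ![i, j]).det_nonneg
  have hji : M j i = M i j := by simpa using hM.isHermitian.apply i j
  rw [det_fin_two] at h
  simp only [submatrix_apply, cons_val_zero, cons_val_one, hji] at h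
  nlinarith

theorem PosSemidef.apply_self_pos_of_apply_ne_zero {n : Type*} [Fintype n] [DecidableEq n]
    {M : Matrix n n ℝ} (hM : M.PosSemidef) {i j : n} (h : M i j ≠ 0) : 0 < M i i := by
  refine hM.diag_nonneg.lt_of_ne fun h0 => h ?_
  have := hM.sq_apply_le i j
  rw [← h0, zero_mul] at this
  exact pow_eq_zero_iff two_ne_zero |>.1 (le_antisymm this (sq_nonneg _))

section FirstIndex

variable {d : ℕ} {M : Matrix (Fin (d + 1)) (Fin (d + 1)) ℝ}

theorem mulVec_cons_zero (c : ℝ) (x : Fin d → ℝ) :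
    (M *ᵥ Fin.cons c x) 0 = M 0 0 * c + Fin.tail (M 0) ⬝ᵥ x := by
  simp [mulVec, dotProduct, Fin.sum_univ_succ, Fin.tail]

theorem IsHermitian.mulVec_cons_succ (hM : M.IsHermitian) (c : ℝ) (x : Fin d → ℝ) (i : Fin d) :
    (M *ᵥ Fin.cons c x) i.succ = Fin.tail (M 0) i * c + (M.submatrix Fin.succ Fin.succ *ᵥ x) i := by
  have hsym : M i.succ 0 = M 0 i.succ := by simpa using hM.apply 0 i.succ
  simp [mulVec, dotProduct, Fin.sum_univ_succ, Fin.tail, hsym]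

theorem IsHermitian.cons_dotProduct_mulVec_cons (hM : M.IsHermitian) (c : ℝ) (x : Fin d → ℝ) :
    Fin.cons c x ⬝ᵥ M *ᵥ Fin.cons c x =
      M 0 0 * c ^ 2 + 2 * c * (Fin.tail (M 0) ⬝ᵥ x) + x ⬝ᵥ M.submatrix Fin.succ Fin.succ *ᵥ x := by
  have hsym (j : Fin d) : M j.succ 0 = M 0 j.succ := by simpa using hM.apply 0 j.succ
  simp only [dotProduct, mulVec, Fin.tail, Fin.sum_univ_succ, Fin.cons_zero, Fin.cons_succ,
    submatrix_apply, hsym, mul_add, Finset.sum_add_distrib, Finset.mul_sum]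
  have hcross : ∑ i : Fin d, 2 * c * (M 0 i.succ * x i) =
      ∑ i : Fin d, x i * (M 0 i.succ * c) + ∑ i : Fin d, c * (M 0 i.succ * x i) := by
    rw [← Finset.sum_add_distrib]
    exact Finset.sum_congr rfl fun i _ => by ring
  rw [hcross]
  ring

theorem PosSemidef.schurComplement_zero_zero (hM : M.PosSemidef) :
    (M.submatrix Fin.succ Fin.succ -
      (M 0 0)⁻¹ • vecMulVec (Fin.tail (M 0)) (Fin.tail (M 0))).PosSemidef := by
  set b := Fin.tail (M 0)
  refine .of_dotProduct_mulVec_nonneg ((hM.isHermitian.submatrix _).sub ?_) fun x => ?_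
  · exact IsHermitian.smul (by simp [IsHermitian]) (by simp [IsSelfAdjoint])
  have h := hM.dotProduct_mulVec_nonneg (Fin.cons (-((M 0 0)⁻¹ * (b ⬝ᵥ x))) x)
  rw [star_trivial, hM.isHermitian.cons_dotProduct_mulVec_cons] at h
  rw [star_trivial, sub_mulVec, dotProduct_sub, smul_mulVec, vecMulVec_mulVec, dotProduct_smul]
  simp only [op_smul_eq_smul, dotProduct_smul, smul_eq_mul, dotProduct_comm x b] at h ⊢
  convert h using 1
  rcases eq_or_ne (M 0 0) 0 with hm | hm
  · simp [hm]
  · field_simp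
    ring

end FirstIndex

theorem PosSemidef.exists_pos_mulVec_nonneg {d : ℕ} {M : Matrix (Fin d) (Fin d) ℝ}
    (hM : M.PosSemidef) (hZ : ∀ i j, i ≠ j → M i j ≤ 0) :
    ∃ t : Fin d → ℝ, (∀ i, 0 < t i) ∧ ∀ i, 0 ≤ (M *ᵥ t) i := by
  induction d with
  | zero => exact ⟨0, finZeroElim, finZeroElim⟩
  | succ d ih =>
    set b := Fin.tail (M 0)
    have hb (j : Fin d) : b j ≤ 0 := hZ 0 j.succ (Fin.succ_ne_zero j).symm
    have hm : 0 ≤ M 0 0 := hM.diag_nonneg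
    obtain ⟨t, ht, hSt⟩ := ih hM.schurComplement_zero_zero fun i j hij => by
      have := hZ i.succ j.succ (Fin.succ_injective _ |>.ne hij)
      have := mul_nonneg (inv_nonneg.2 hm) (mul_nonneg_of_nonpos_of_nonpos (hb i) (hb j))
      simp only [sub_apply, submatrix_apply, smul_apply, vecMulVec_apply, smul_eq_mul]
      linarith
    by_cases hb0 : b = 0
    · refine ⟨Fin.cons 1 t, Fin.forall_fin_succ.2 ⟨by simp, fun i => by simpa using ht i⟩,
        Fin.forall_fin_succ.2 ⟨by simpa [mulVec_cons_zero, show Fin.tail (M 0) = 0 from hb0]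
          using hm, fun i => ?_⟩⟩
      simpa [hM.isHermitian.mulVec_cons_succ, hb0, b] using hSt i
    obtain ⟨j, hj⟩ := Function.ne_iff.1 hb0
    have hbt : b ⬝ᵥ t < 0 := by
      have := Finset.sum_lt_sum (s := Finset.univ) (g := fun _ => (0 : ℝ))
        (fun i _ => mul_nonpos_of_nonpos_of_nonneg (hb i) (ht i).le)
        ⟨j, Finset.mem_univ j, mul_neg_of_neg_of_pos ((hb j).lt_of_ne hj) (ht j)⟩
      simpa [dotProduct] using this
    have hm' : 0 < M 0 0 := hM.apply_self_pos_of_apply_ne_zero hj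
    set c := -((M 0 0)⁻¹ * (b ⬝ᵥ t))
    have hc : 0 < c := neg_pos.2 (mul_neg_of_pos_of_neg (inv_pos.2 hm') hbt)
    refine ⟨Fin.cons c t, Fin.forall_fin_succ.2 ⟨by simpa using hc, fun i => by simpa using ht i⟩,
      Fin.forall_fin_succ.2 ⟨?_, fun i => ?_⟩⟩
    · rw [mulVec_cons_zero, mul_neg, mul_inv_cancel_left₀ hm'.ne', neg_add_cancel]
    · rw [hM.isHermitian.mulVec_cons_succ]
      convert hSt i using 1
      simp [sub_mulVec, smul_mulVec, vecMulVec_mulVec, op_smul_eq_smul, c, b]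
      ring

section PairBlock

variable {n K : Type*} [DecidableEq n]

def pairBlock [NonUnitalNonAssocSemiring K] (k l : n) (α a a' β : K) : Matrix n n K :=
  single k k α + single k l a + single l k a' + single l l β

theorem vecMulVec_single_single [NonUnitalNonAssocSemiring K] (k l : n) (x y : K) :
    vecMulVec (Pi.single k x) (Pi.single l y) = single k l (x * y) := by
  ext i j
  simp only [vecMulVec_apply, single_apply, Pi.single_apply]
  aesop

theorem vecMulVec_single_add_single [NonUnitalNonAssocSemiring K] (k l : n) (x y x' y' : K) :
    vecMulVec (Pi.single k x + Pi.single l y) (Pi.single k x' + Pi.single l y') =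
      pairBlock k l (x * x') (x * y') (y * x') (y * y') := by
  simp only [add_vecMulVec, vecMulVec_add, vecMulVec_single_single, pairBlock]
  abel

theorem eq_sum_single_add_sum_pairBlock [Fintype n] [Field K] [NeZero (2 : K)]
    (X : Matrix n n K) (c : n → n → K) :
    X = ∑ i, single i i (X i i - ∑ j ∈ Finset.univ.erase i, c i j) +
      ∑ p ∈ Finset.univ.offDiag,
        pairBlock p.1 p.2 (c p.1 p.2 / 2) (X p.1 p.2 / 2) (X p.2 p.1 / 2) (c p.2 p.1 / 2) := by
  ext i j
  simp only [add_apply, sum_apply]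
  rw [Finset.sum_univ_offDiag]
  simp only [pairBlock, add_apply, single_apply]
  rcases eq_or_ne i j with rfl | hij
  · simp [Finset.sum_add_distrib, ite_and, ← Finset.sum_div]
    field_simp
    ring
  · simp [hij, Finset.sum_add_distrib, ite_and]

end PairBlock

end Matrix

-- The parameters of the rank-one term in `PCP.pairBlock`.
theorem exists_mul_mul_eq_sq {α β a a' s : ℝ} (hα : 0 ≤ α) (hβ : 0 ≤ β) (ha : 0 ≤ a)
    (ha' : 0 ≤ a') (hsα : s ^ 2 ≤ α * β) (hsa : s ^ 2 ≤ a * a') :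
    ∃ p q, 0 ≤ p ∧ 0 ≤ q ∧ p ≤ a' ∧ α * q ≤ a ∧ p * q ≤ β ∧ α * p * q = s ^ 2 := by
  rcases eq_or_ne s 0 with rfl | hs
  · exact ⟨0, 0, le_rfl, le_rfl, ha', by simpa, by simpa, by simp⟩
  have hs2 : 0 < s ^ 2 := by positivity
  have hαpos : 0 < α := hα.lt_of_ne (by rintro rfl; nlinarith)
  have haa : 0 < a * a' := hs2.trans_le hsa
  set r := |s| / Real.sqrt (a * a')
  have hr1 : r ≤ 1 := div_le_one_of_le₀ (Real.abs_le_sqrt hsa) (Real.sqrt_nonneg _)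
  have hr2 : r ^ 2 * (a * a') = s ^ 2 := by
    rw [div_pow, sq_abs, Real.sq_sqrt haa.le, div_mul_cancel₀ _ haa.ne']
  refine ⟨r * a', r * a / α, by positivity, by positivity, mul_le_of_le_one_left ha' hr1,
    ?_, ?_, ?_⟩
  · rw [mul_div_cancel₀ _ hαpos.ne']
    exact mul_le_of_le_one_left ha hr1
  · rw [show r * a' * (r * a / α) = s ^ 2 / α by field_simp; linear_combination hr2]
    exact (div_le_iff₀' hαpos).2 hsα
  · field_simp
    linear_combination hr2

namespace PCP

variable {d : ℕ}

theorem zero : PCP (0 : Matrix (Fin d) (Fin d) ℂ) 0 :=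
  ⟨0, 0, 0, by ext i j; simp [mul_apply], by ext i j; simp [mul_apply]⟩

theorem add {A₁ B₁ A₂ B₂ : Matrix (Fin d) (Fin d) ℂ} (h₁ : PCP A₁ B₁) (h₂ : PCP A₂ B₂) :
    PCP (A₁ + A₂) (B₁ + B₂) := by
  obtain ⟨d₁, V₁, W₁, rfl, rfl⟩ := h₁
  obtain ⟨d₂, V₂, W₂, rfl, rfl⟩ := h₂
  refine ⟨d₁ + d₂, of fun i => Fin.append (V₁ i) (V₂ i), of fun i => Fin.append (W₁ i) (W₂ i),
    ?_, ?_⟩ <;> ext i j <;> simp [mul_apply, Fin.sum_univ_add]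

theorem sum {ι : Type*} (s : Finset ι) {A B : ι → Matrix (Fin d) (Fin d) ℂ}
    (h : ∀ x ∈ s, PCP (A x) (B x)) : PCP (∑ x ∈ s, A x) (∑ x ∈ s, B x) := by
  classical
  induction s using Finset.induction_on with
  | empty => simpa using zero
  | insert x s hx ih =>
    rw [Finset.sum_insert hx, Finset.sum_insert hx]
    exact (h x (s.mem_insert_self x)).add (ih fun y hy => h y (Finset.mem_insert_of_mem hy))

theorem vecMulVec (v w : Fin d → ℂ) :
    PCP (Matrix.vecMulVec (v * star v) (star (w * star w)))
      (Matrix.vecMulVec (v * w) (star (v * w))) :=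
  ⟨1, replicateCol _ v, replicateCol _ w, by ext i j; simp [mul_apply, vecMulVec_apply],
    by ext i j; simp [mul_apply, vecMulVec_apply]⟩

theorem single_same (k : Fin d) {δ : ℝ} (hδ : 0 ≤ δ) :
    PCP (single k k (δ : ℂ)) (single k k (δ : ℂ)) := by
  convert PCP.vecMulVec (Pi.single k (Real.sqrt δ : ℂ)) (Pi.single k 1) using 1 <;>
    simp [← Pi.single_mul, vecMulVec_single_single, ← Complex.ofReal_mul, Real.mul_self_sqrt hδ]

theorem single_of_ne {k l : Fin d} (hkl : k ≠ l) {a : ℝ} (ha : 0 ≤ a) :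
    PCP (single k l (a : ℂ)) 0 := by
  convert PCP.vecMulVec (Pi.single k (Real.sqrt a : ℂ)) (Pi.single l 1) using 1
  · simp [← Pi.single_mul, vecMulVec_single_single, ← Complex.ofReal_mul, Real.mul_self_sqrt ha]
  · ext i j
    by_cases hi : i = k <;> simp [vecMulVec_apply, Pi.single_apply, hi, hkl]

theorem pairBlock {k l : Fin d} (hkl : k ≠ l) {α β a a' : ℝ} {b : ℂ} (hα : 0 ≤ α) (hβ : 0 ≤ β)
    (ha : 0 ≤ a) (ha' : 0 ≤ a') (hbα : ‖b‖ ^ 2 ≤ α * β) (hba : ‖b‖ ^ 2 ≤ a * a') :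
    PCP (pairBlock k l (α : ℂ) a a' β) (pairBlock k l (α : ℂ) b (star b) β) := by
  obtain ⟨p, q, hp, hq, hpa', hqa, hpqβ, hαpq⟩ := exists_mul_mul_eq_sq hα hβ ha ha' hbα hba
  -- `v = (√α, √p)` and `w = (φ, √q)`, with `φ` the phase of `b`, give the `B`-block up to its
  -- corner `p * q ≤ β`; the remaining slack of both blocks consists of nonnegative matrix units.
  set φ := Complex.exp (b.arg * Complex.I)
  have hb : ((Real.sqrt α * Real.sqrt p * Real.sqrt q : ℝ) : ℂ) * φ = b := by
    rw [← Real.sqrt_mul hα, ← Real.sqrt_mul (mul_nonneg hα hp), hαpq, Real.sqrt_sq (norm_nonneg b)]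
    exact Complex.norm_mul_exp_arg_mul_I b
  have hrank : PCP (Matrix.pairBlock k l (α : ℂ) (α * q : ℝ) p (p * q : ℝ))
      (Matrix.pairBlock k l (α : ℂ) b (star b) (p * q : ℝ)) := by
    convert PCP.vecMulVec (Pi.single k (Real.sqrt α : ℂ) + Pi.single l (Real.sqrt p : ℂ))
      (Pi.single k φ + Pi.single l (Real.sqrt q : ℂ)) using 1
    all_goals
      simp only [star_add, ← Pi.single_star, Pi.single_add_single_mul hkl,
        vecMulVec_single_add_single]
    · simp [Complex.conj_mul', φ, ← Complex.ofReal_mul, Real.mul_self_sqrt, hα, hp, hq]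
    · have hkk : (Real.sqrt α : ℂ) * φ * star ((Real.sqrt α : ℂ) * φ) = α := by
        rw [Complex.star_def, Complex.mul_conj']
        simp [φ, ← Complex.ofReal_pow, Real.sq_sqrt hα]
      have hll : (Real.sqrt p : ℂ) * Real.sqrt q * star ((Real.sqrt p : ℂ) * Real.sqrt q) =
          (p * q : ℝ) := by
        rw [Complex.star_def, Complex.mul_conj']
        simp [mul_pow, ← Complex.ofReal_pow, Real.sq_sqrt hp, Real.sq_sqrt hq]
      have hkl : (Real.sqrt α : ℂ) * φ * star ((Real.sqrt p : ℂ) * Real.sqrt q) = b := by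
        rw [← hb]; simp; ring
      have hlk : (Real.sqrt p : ℂ) * Real.sqrt q * star ((Real.sqrt α : ℂ) * φ) = star b := by
        rw [← hkl, star_mul (_ * φ), star_star]
      rw [hkk, hkl, hlk, hll]
  convert ((hrank.add (single_of_ne hkl (sub_nonneg.2 hqa))).add
    (single_of_ne hkl.symm (sub_nonneg.2 hpa'))).add (single_same l (sub_nonneg.2 hpqβ)) using 1
  all_goals
    ext i j
    simp only [Matrix.pairBlock, Matrix.add_apply, Matrix.zero_apply, single_apply]
    split_ifs <;> push_cast <;> ring

end PCP

section ComparisonMatrix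

variable {d : ℕ}

theorem Matrix.IsHermitian.norm_apply_comm {B : Matrix (Fin d) (Fin d) ℂ} (hB : B.IsHermitian)
    (i j : Fin d) : ‖B j i‖ = ‖B i j‖ := by
  rw [← hB.apply i j, norm_star]

theorem Matrix.PosSemidef.norm_apply_self {B : Matrix (Fin d) (Fin d) ℂ} (hB : B.PosSemidef)
    (i : Fin d) : ‖B i i‖ = (B i i).re :=
  (Complex.re_eq_norm.2 hB.diag_nonneg).symm

theorem comparisonMatrix_apply_self (Z : Matrix (Fin d) (Fin d) ℂ) (i : Fin d) :
    comparisonMatrix Z i i = ‖Z i i‖ := if_pos rfl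

theorem comparisonMatrix_apply_of_ne (Z : Matrix (Fin d) (Fin d) ℂ) {i j : Fin d} (hij : i ≠ j) :
    comparisonMatrix Z i j = -‖Z i j‖ := if_neg hij

theorem Matrix.IsHermitian.isHermitian_comparisonMatrix {B : Matrix (Fin d) (Fin d) ℂ}
    (hB : B.IsHermitian) : (comparisonMatrix B).IsHermitian := by
  ext i j
  rcases eq_or_ne i j with rfl | hij
  · rfl
  · simp [comparisonMatrix_apply_of_ne _ hij, comparisonMatrix_apply_of_ne _ hij.symm,
      hB.norm_apply_comm]

theorem comparisonMatrix_mulVec_apply (Z : Matrix (Fin d) (Fin d) ℂ) (t : Fin d → ℝ) (i : Fin d) :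
    (comparisonMatrix Z *ᵥ t) i = ‖Z i i‖ * t i - ∑ j ∈ Finset.univ.erase i, ‖Z i j‖ * t j := by
  rw [mulVec, dotProduct, ← Finset.add_sum_erase _ _ (Finset.mem_univ i),
    comparisonMatrix_apply_self, sub_eq_add_neg, ← Finset.sum_neg_distrib]
  congr 1
  exact Finset.sum_congr rfl fun j hj => by
    rw [comparisonMatrix_apply_of_ne Z (Finset.ne_of_mem_erase hj).symm, neg_mul]

theorem comparisonMatrix_mulVec_nonneg_iff (Z : Matrix (Fin d) (Fin d) ℂ) {t : Fin d → ℝ}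
    {i : Fin d} (ht : 0 < t i) :
    0 ≤ (comparisonMatrix Z *ᵥ t) i ↔ ∑ j ∈ Finset.univ.erase i, t j / t i * ‖Z i j‖ ≤ ‖Z i i‖ := by
  rw [comparisonMatrix_mulVec_apply, sub_nonneg, ← div_le_iff₀ ht, Finset.sum_div]
  exact Iff.of_eq (congrArg (· ≤ _) (Finset.sum_congr rfl fun j _ => by ring))

theorem posSemidef_comparisonMatrix_of_diagDominant {B : Matrix (Fin d) (Fin d) ℂ}
    (hB : B.PosSemidef) (hdom : ∀ i, ∑ j, (if j = i then 0 else ‖B i j‖) ≤ (B i i).re) :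
    (comparisonMatrix B).PosSemidef := by
  refine hB.isHermitian.isHermitian_comparisonMatrix.posSemidef_of_sum_abs_le_diag fun i => ?_
  rw [comparisonMatrix_apply_self, hB.norm_apply_self]
  refine le_of_eq_of_le ?_ (hdom i)
  rw [← Finset.add_sum_erase _ _ (Finset.mem_univ i), if_pos rfl, zero_add]
  refine Finset.sum_congr rfl fun j hj => ?_
  have hji := Finset.ne_of_mem_erase hj
  rw [comparisonMatrix_apply_of_ne _ hji.symm, abs_neg, abs_norm, if_neg hji]

theorem PCP.of_diagDominant_scaling {A B : Matrix (Fin d) (Fin d) ℂ}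
    (hdiag : ∀ i, A i i = B i i) (hA : ∀ i j, (A i j).im = 0 ∧ 0 ≤ (A i j).re)
    (hB : B.PosSemidef) (hAB : ∀ i j, ‖B i j‖ ^ 2 ≤ (A i j).re * (A j i).re)
    {t : Fin d → ℝ} (ht : ∀ i, 0 < t i)
    (hdom : ∀ i, ∑ j ∈ Finset.univ.erase i, t j / t i * ‖B i j‖ ≤ (B i i).re) : PCP A B := by
  set c : Fin d → Fin d → ℝ := fun i j => t j / t i * ‖B i j‖
  have hdom' (i : Fin d) : ∑ j ∈ Finset.univ.erase i, c i j ≤ (B i i).re := hdom i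
  have hc_nonneg (i j : Fin d) : 0 ≤ c i j := by have := ht i; have := ht j; positivity
  have hc_mul (i j : Fin d) : c i j * c j i = ‖B i j‖ ^ 2 := by
    simp only [c, hB.isHermitian.norm_apply_comm]
    field_simp [(ht i).ne', (ht j).ne']
  have hAre (i j : Fin d) : A i j = ((A i j).re : ℂ) := Complex.ext rfl (by simp [(hA i j).1])
  have hBre (i : Fin d) : B i i = ((B i i).re : ℂ) :=
    Complex.ext rfl (by simpa using (Complex.nonneg_iff.1 hB.diag_nonneg).2.symm)
  have hdiagonal (i : Fin d) (_ : i ∈ Finset.univ) :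
      PCP (single i i (A i i - ∑ j ∈ Finset.univ.erase i, (c i j : ℂ)))
        (single i i (B i i - ∑ j ∈ Finset.univ.erase i, (c i j : ℂ))) := by
    have h := PCP.single_same i (sub_nonneg.2 (hdom' i))
    push_cast [← hBre] at h
    rwa [hdiag]
  have hpair (p : Fin d × Fin d) (hp : p ∈ Finset.univ.offDiag) :
      PCP (Matrix.pairBlock p.1 p.2 ((c p.1 p.2 : ℂ) / 2) (A p.1 p.2 / 2) (A p.2 p.1 / 2)
          ((c p.2 p.1 : ℂ) / 2))
        (Matrix.pairBlock p.1 p.2 ((c p.1 p.2 : ℂ) / 2) (B p.1 p.2 / 2) (B p.2 p.1 / 2)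
          ((c p.2 p.1 : ℂ) / 2)) := by
    obtain ⟨k, l⟩ := p
    have h := PCP.pairBlock (Finset.mem_offDiag.1 hp).2.2 (α := c k l / 2) (β := c l k / 2)
      (a := (A k l).re / 2) (a' := (A l k).re / 2) (b := B k l / 2)
      (by have := hc_nonneg k l; positivity) (by have := hc_nonneg l k; positivity)
      (by have := (hA k l).2; positivity) (by have := (hA l k).2; positivity)
      (le_of_eq (by rw [norm_div, Complex.norm_two]; linear_combination (-1 / 4) * hc_mul k l))
      (by rw [norm_div, Complex.norm_two]; linarith [hAB k l])
    push_cast [← hAre] at h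
    rwa [star_div₀, star_ofNat, hB.isHermitian.apply] at h
  have h := (PCP.sum _ hdiagonal).add (PCP.sum _ hpair)
  rwa [← eq_sum_single_add_sum_pairBlock A, ← eq_sum_single_add_sum_pairBlock B] at h

theorem PCP.of_posSemidef_comparisonMatrix {A B : Matrix (Fin d) (Fin d) ℂ}
    (hdiag : ∀ i, A i i = B i i) (hA : ∀ i j, (A i j).im = 0 ∧ 0 ≤ (A i j).re)
    (hB : B.PosSemidef) (hAB : ∀ i j, ‖B i j‖ ^ 2 ≤ (A i j).re * (A j i).re)
    (hM : (comparisonMatrix B).PosSemidef) : PCP A B := by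
  obtain ⟨t, ht, hMt⟩ := hM.exists_pos_mulVec_nonneg fun i j hij => by
    rw [comparisonMatrix_apply_of_ne B hij]
    exact neg_nonpos.2 (norm_nonneg _)
  refine PCP.of_diagDominant_scaling hdiag hA hB hAB ht fun i => ?_
  rw [← hB.norm_apply_self, ← comparisonMatrix_mulVec_nonneg_iff B (ht i)]
  exact hMt i

end ComparisonMatrix

theorem stmt8 {d : ℕ} (A B : Matrix (Fin d) (Fin d) ℂ)
    (hdiag : ∀ i, A i i = B i i)
    (hA : ∀ i j, (A i j).im = 0 ∧ 0 ≤ (A i j).re)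
    (hB : B.PosSemidef)
    (hAB : ∀ i j, ‖B i j‖ ^ 2 ≤ (A i j).re * (A j i).re) :
    ((∀ i, ∑ j, (if j = i then 0 else ‖B i j‖) ≤ (B i i).re) →
        (comparisonMatrix B).PosSemidef) ∧
    ((comparisonMatrix B).PosSemidef → PCP A B) :=
  ⟨posSemidef_comparisonMatrix_of_diagDominant hB,
    PCP.of_posSemidef_comparisonMatrix hdiag hA hB hAB⟩
end

section
/- Let A, B, C be d×d complex matrices with equal diagonals. Then the rank (over ℂ) of X^{(3)}_{(A,B,C)} equals rank(B) + Σ_{1 ≤ i < j ≤ d} rank of the 2×2 matrix [[A_ij, C_ij], [C_ji, A_ji]]. -/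
/-!
Order the index pairs so that the diagonal pairs `(i, i)` come first and each off-diagonal pair
`(i, j)` sits next to `(j, i)`. The only nonzero entries of `X3 A B C` then lie in diagonal
blocks: the diagonal pairs carry `B` (the entry at `((i,i),(i,i))` is `A i i = B i i`), and
`{(i, j), (j, i)}` with `i < j` carries `!![A i j, C i j; C j i, A j i]`. Rank is additive over
the blocks of a block-diagonal matrix.
-/

open Matrix

theorem LinearMap.finrank_range_piMap {K ι : Type*} [Field K] [Fintype ι] {φ ψ : ι → Type*}
    [∀ i, AddCommGroup (φ i)] [∀ i, Module K (φ i)]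
    [∀ i, AddCommGroup (ψ i)] [∀ i, Module K (ψ i)] [∀ i, FiniteDimensional K (ψ i)]
    (f : ∀ i, φ i →ₗ[K] ψ i) :
    Module.finrank K (LinearMap.range (LinearMap.piMap f)) =
      ∑ i, Module.finrank K (LinearMap.range (f i)) := by
  have hfactor : LinearMap.piMap f =
      LinearMap.piMap (fun i => (LinearMap.range (f i)).subtype) ∘ₗ
        LinearMap.piMap (fun i => (f i).rangeRestrict) := rfl
  have hsurj : LinearMap.range (LinearMap.piMap (fun i => (f i).rangeRestrict)) = ⊤ :=
    LinearMap.range_eq_top.2 <| by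
      rw [LinearMap.coe_piMap]
      exact Function.Surjective.piMap fun i => (f i).surjective_rangeRestrict
  have hinj : Function.Injective (LinearMap.piMap fun i => (LinearMap.range (f i)).subtype) := by
    rw [LinearMap.coe_piMap]
    exact Function.Injective.piMap fun i => Subtype.val_injective
  rw [hfactor, LinearMap.range_comp_of_range_eq_top _ hsurj,
    LinearMap.finrank_range_of_inj hinj, Module.finrank_pi_fintype]

theorem Matrix.rank_blockDiagonal' {K o : Type*} [Field K] [Fintype o] [DecidableEq o]
    {m n : o → Type*} [∀ k, Fintype (m k)] [∀ k, Fintype (n k)]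
    (M : ∀ k, Matrix (m k) (n k) K) :
    (blockDiagonal' M).rank = ∑ k, (M k).rank := by
  have hconj : (blockDiagonal' M).mulVecLin =
      (LinearEquiv.piCurry K fun k (_ : m k) => K).symm.toLinearMap ∘ₗ
        LinearMap.piMap (fun k => (M k).mulVecLin) ∘ₗ
        (LinearEquiv.piCurry K fun k (_ : n k) => K).toLinearMap := by
    refine LinearMap.ext fun x => funext fun ⟨k, i⟩ => ?_
    simp only [mulVecLin_apply, LinearMap.coe_comp, Function.comp_apply, LinearEquiv.coe_coe,
      LinearEquiv.piCurry_apply, LinearEquiv.piCurry_symm_apply, LinearMap.coe_piMap,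
      Sigma.uncurry, Pi.map_apply, mulVec, dotProduct, Fintype.sum_sigma]
    rw [Fintype.sum_eq_single k fun k' hk' => by simp [blockDiagonal'_apply_ne M _ _ hk'.symm]]
    simp [blockDiagonal'_apply_eq, Sigma.curry]
  rw [Matrix.rank, hconj, LinearMap.range_comp,
    LinearMap.range_comp_of_range_eq_top _ (LinearEquiv.range _), LinearEquiv.finrank_map_eq,
    LinearMap.finrank_range_piMap]
  rfl

theorem Matrix.rank_eq_sum_rank_submatrix_fiber {K m n κ : Type*} [Field K] [Fintype m]
    [Fintype n] [Fintype κ] [DecidableEq κ] (M : Matrix m n K) (f : m → κ) (g : n → κ)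
    (hM : ∀ i j, f i ≠ g j → M i j = 0) :
    M.rank = ∑ k, (M.submatrix (Subtype.val : {i // f i = k} → m)
      (Subtype.val : {j // g j = k} → n)).rank := by
  have hblock : M.submatrix (Equiv.sigmaFiberEquiv f) (Equiv.sigmaFiberEquiv g) =
      blockDiagonal' fun k => M.submatrix (Subtype.val : {i // f i = k} → m)
        (Subtype.val : {j // g j = k} → n) := by
    ext ⟨k, i⟩ ⟨k', j⟩
    by_cases hk : k = k'
    · subst hk
      simp [blockDiagonal'_apply_eq]
    · rw [blockDiagonal'_apply_ne _ _ _ hk]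
      exact hM _ _ (by simpa [i.2, j.2] using hk)
  rw [← rank_blockDiagonal', ← hblock, rank_submatrix]

section pairClass

variable {α : Type*} [LinearOrder α]

def pairClass (p : α × α) : Option (α × α) :=
  if p.1 = p.2 then none else some (min p.1 p.2, max p.1 p.2)

theorem pairClass_eq_none_iff {p : α × α} : pairClass p = none ↔ p.1 = p.2 := by
  unfold pairClass; split_ifs <;> grind

theorem pairClass_eq_some_iff {a b : α} (hab : a < b) {p : α × α} :
    pairClass p = some (a, b) ↔ p = (a, b) ∨ p = (b, a) := by
  unfold pairClass; split_ifs <;> grind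

theorem pairClass_ne_some_of_not_lt {a b : α} (hab : ¬a < b) (p : α × α) :
    pairClass p ≠ some (a, b) := by
  unfold pairClass; split_ifs <;> grind

end pairClass

section X3Blocks

variable {d : ℕ}

theorem X3_apply_eq_zero_of_pairClass_ne (A B C : Matrix (Fin d) (Fin d) ℂ) {p q : Fin d × Fin d}
    (h : pairClass p ≠ pairClass q) : X3 A B C p q = 0 := by
  obtain ⟨i, j⟩ := p
  obtain ⟨k, l⟩ := q
  simp only [X3, of_apply]
  split_ifs <;> simp_all [pairClass, min_comm, max_comm]

def pairClassNoneEquiv : Fin d ≃ {p : Fin d × Fin d // pairClass p = none} where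
  toFun i := ⟨(i, i), pairClass_eq_none_iff.2 rfl⟩
  invFun p := p.1.1
  left_inv _ := rfl
  right_inv p := Subtype.ext (Prod.ext rfl (pairClass_eq_none_iff.1 p.2))

theorem rank_X3_submatrix_pairClass_none (A B C : Matrix (Fin d) (Fin d) ℂ)
    (hdiag : ∀ i, A i i = B i i) :
    ((X3 A B C).submatrix (Subtype.val : {p // pairClass p = none} → Fin d × Fin d)
      (Subtype.val : {p // pairClass p = none} → Fin d × Fin d)).rank = B.rank := by
  rw [← rank_submatrix _ pairClassNoneEquiv pairClassNoneEquiv]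
  congr 1
  ext i j
  by_cases hij : i = j
  · subst hij; simp [X3, pairClassNoneEquiv, hdiag]
  · simp [X3, pairClassNoneEquiv, hij]

def pairClassSomeEquiv {a b : Fin d} (hab : a < b) :
    Fin 2 ≃ {p : Fin d × Fin d // pairClass p = some (a, b)} where
  toFun t := ⟨![(a, b), (b, a)] t, by fin_cases t <;> simp [pairClass_eq_some_iff hab]⟩
  invFun p := if p.1 = (a, b) then 0 else 1
  left_inv t := by fin_cases t <;> simp [hab.ne']
  right_inv p := by
    obtain ⟨p, hp⟩ := p
    rcases (pairClass_eq_some_iff hab).1 hp with rfl | rfl <;> simp [hab.ne']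

theorem rank_X3_submatrix_pairClass_some (A B C : Matrix (Fin d) (Fin d) ℂ) (a b : Fin d) :
    ((X3 A B C).submatrix (Subtype.val : {p // pairClass p = some (a, b)} → Fin d × Fin d)
      (Subtype.val : {p // pairClass p = some (a, b)} → Fin d × Fin d)).rank =
      if a < b then (!![A a b, C a b; C b a, A b a] : Matrix (Fin 2) (Fin 2) ℂ).rank else 0 := by
  split_ifs with hab
  · rw [← rank_submatrix _ (pairClassSomeEquiv hab) (pairClassSomeEquiv hab)]
    congr 1
    ext s t
    fin_cases s <;> fin_cases t <;> simp [X3, pairClassSomeEquiv, hab.ne, hab.ne']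
  · have : IsEmpty {p // pairClass p = some (a, b)} :=
      ⟨fun p => pairClass_ne_some_of_not_lt hab p.1 p.2⟩
    rw [Subsingleton.elim ((X3 A B C).submatrix _ _) 0, rank_zero]

end X3Blocks

theorem stmt11 {d : ℕ} (A B C : Matrix (Fin d) (Fin d) ℂ)
    (hdiag : ∀ i, A i i = B i i ∧ A i i = C i i) :
    (X3 A B C).rank =
      B.rank + ∑ i : Fin d, ∑ j : Fin d,
        (if i < j then (!![A i j, C i j; C j i, A j i] : Matrix (Fin 2) (Fin 2) ℂ).rank
         else 0) := by
  rw [rank_eq_sum_rank_submatrix_fiber (X3 A B C) pairClass pairClass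
      fun _ _ => X3_apply_eq_zero_of_pairClass_ne A B C,
    Fintype.sum_option, rank_X3_submatrix_pairClass_none A B C fun i => (hdiag i).1,
    Fintype.sum_prod_type]
  simp only [rank_X3_submatrix_pairClass_some]
end

section
/- Let A, B, C be d×d complex matrices with equal diagonals and suppose the map Φ^{(3)}_{(A,B,C)} : M_d(ℂ) → M_d(ℂ) is positive, i.e. it sends every positive semidefinite matrix to a positive semidefinite matrix. Then: (i) every entry of A is a nonnegative real number; (ii) B and C are Hermitian; and (iii) √(A_ii·A_jj) + √(A_ij·A_ji) − |B_ij| − |C_ij| ≥ 0 for all i ≠ j. -/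
/-!
Evaluate `Φ` on the rank-one matrices `v vᴴ`. For `v = e_j`, the `(i, i)` entry of `Φ(v vᴴ)` is
`A i j`, which is therefore nonnegative. For `v = e_i + t e_j` the `{i, j}` block of `Φ(v vᴴ)` is
`[[A i i + A i j |t|², B i j t̄ + C i j t], [B j i t + C j i t̄, A j i + A j j |t|²]]`: its being
Hermitian for `t = 1` and `t = I` makes `B` and `C` Hermitian, and its nonnegative determinant,
with `t = √s ζ` for a phase `ζ` aligning `B i j ζ̄` with `C i j ζ`, gives
`s (|B i j| + |C i j|)² ≤ (A i i + A i j s) (A j i + A j j s)` for all `s > 0`.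
Optimising over `s` yields `(|B i j| + |C i j|)² ≤ (√(A i i A j j) + √(A i j A j i))²`.
-/

open Matrix
open scoped ComplexOrder

/-- The DOC map `Φ^{(3)}_{(A,B,C)}`:
`Φ(Z) = Diag(A z) + B̃ ⊙ Z + C̃ ⊙ Zᵀ`, where `z = diag Z` and `B̃, C̃` are `B, C`
with their diagonals set to zero. -/
noncomputable def Phi3 {d : ℕ} (A B C : Matrix (Fin d) (Fin d) ℂ)
    (Z : Matrix (Fin d) (Fin d) ℂ) : Matrix (Fin d) (Fin d) ℂ :=
  Matrix.diagonal (fun i => ∑ j, A i j * Z j j) +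
    (Matrix.of fun i j => if i = j then 0 else B i j) ⊙ Z +
    (Matrix.of fun i j => if i = j then 0 else C i j) ⊙ Zᵀ

open scoped ComplexConjugate

theorem le_add_two_mul_sqrt_mul_of_forall_pos {L c m p : ℝ} (hc : 0 ≤ c) (hp : 0 ≤ p)
    (h : ∀ s : ℝ, 0 < s → L * s ≤ c + m * s + p * s ^ 2) : L ≤ m + 2 * √(c * p) := by
  by_contra! hlt
  have ht : 0 < L - m := by linarith [Real.sqrt_nonneg (c * p)]
  set t := L - m
  have hp : 0 < p := by
    refine hp.lt_of_ne fun hp0 => ?_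
    have hs := h ((c + 1) / t) (by positivity)
    have hts : t * ((c + 1) / t) = c + 1 := mul_div_cancel₀ _ ht.ne'
    subst hp0
    linarith
  -- `s = t / (2 p)` maximises `t s - p s²`
  have hs := h (t / (2 * p)) (by positivity)
  have hsq : (t / 2) ^ 2 ≤ c * p := by
    field_simp at hs
    nlinarith
  linarith [Real.le_sqrt_of_sq_le hsq]

theorem le_sqrt_add_sqrt_sq_of_forall_pos {L α β γ δ : ℝ} (hα : 0 ≤ α) (hβ : 0 ≤ β)
    (hγ : 0 ≤ γ) (hδ : 0 ≤ δ) (h : ∀ s : ℝ, 0 < s → L * s ≤ (α + γ * s) * (δ + β * s)) :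
    L ≤ (√(α * β) + √(γ * δ)) ^ 2 := by
  have key := le_add_two_mul_sqrt_mul_of_forall_pos (mul_nonneg hα hδ) (mul_nonneg hγ hβ)
    (m := α * β + γ * δ) fun s hs => (h s hs).trans_eq (by ring)
  have hsqrt : √(α * δ * (γ * β)) = √(α * β) * √(γ * δ) := by
    rw [← Real.sqrt_mul (mul_nonneg hα hβ)]
    ring_nf
  rw [add_sq, Real.sq_sqrt (mul_nonneg hα hβ), Real.sq_sqrt (mul_nonneg hγ hδ)]
  linarith

theorem Matrix.PosSemidef.norm_apply_sq_le {n 𝕜 : Type*} [Fintype n] [RCLike 𝕜]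
    {M : Matrix n n 𝕜} (hM : M.PosSemidef) (i j : n) :
    ‖M i j‖ ^ 2 ≤ RCLike.re (M i i) * RCLike.re (M j j) := by
  classical
  have hdet := (hM.submatrix ![i, j]).det_nonneg
  rw [det_fin_two] at hdet
  simp only [submatrix_apply, Matrix.cons_val_zero, Matrix.cons_val_one] at hdet
  rw [← hM.1.apply i j, RCLike.star_def, RCLike.conj_mul] at hdet
  have hii := (RCLike.nonneg_iff.mp (hM.diag_nonneg (i := i))).2
  have hjj := (RCLike.nonneg_iff.mp (hM.diag_nonneg (i := j))).2
  have h := (RCLike.nonneg_iff.mp hdet).1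
  rw [map_sub, RCLike.mul_re, hii, hjj, mul_zero, sub_zero, ← RCLike.ofReal_pow,
    RCLike.ofReal_re] at h
  rw [← hM.1.apply i j, norm_star]
  linarith

open Complex in
theorem exists_norm_eq_one_norm_mul_conj_add_mul (b c : ℂ) :
    ∃ ζ : ℂ, ‖ζ‖ = 1 ∧ ‖b * conj ζ + c * ζ‖ = ‖b‖ + ‖c‖ := by
  set ζ := exp (↑((arg b - arg c) / 2) * I)
  refine ⟨ζ, norm_exp_ofReal_mul_I _, ?_⟩
  have key : b * conj ζ + c * ζ = ↑(‖b‖ + ‖c‖) * exp (↑((arg b + arg c) / 2) * I) :=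
    calc b * conj ζ + c * ζ
        = ‖b‖ * exp (arg b * I) * conj ζ + ‖c‖ * exp (arg c * I) * ζ := by
          rw [norm_mul_exp_arg_mul_I, norm_mul_exp_arg_mul_I]
      _ = ↑(‖b‖ + ‖c‖) * exp (↑((arg b + arg c) / 2) * I) := by
          simp only [ζ, ← Complex.exp_conj, map_mul, conj_ofReal, conj_I, mul_assoc,
            ← Complex.exp_add]
          push_cast
          ring_nf
  rw [key, norm_mul, norm_exp_ofReal_mul_I, mul_one, norm_real,
    Real.norm_of_nonneg (by positivity)]

theorem eq_and_eq_of_forall_mul_conj_add_mul {b c b' c' : ℂ}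
    (h : ∀ t : ℂ, b * conj t + c * t = b' * conj t + c' * t) : b = b' ∧ c = c' := by
  have h1 := h 1
  have hI := h Complex.I
  simp only [map_one, mul_one, Complex.conj_I] at h1 hI
  constructor
  · linear_combination (h1 + Complex.I * hI + (b - b' + c' - c) * Complex.I_sq) / 2
  · linear_combination (h1 - Complex.I * hI + (c - c' + b' - b) * Complex.I_sq) / 2

section Entries

variable {d : ℕ} (A B C : Matrix (Fin d) (Fin d) ℂ)

theorem phi3_apply_self (Z : Matrix (Fin d) (Fin d) ℂ) (i : Fin d) :
    Phi3 A B C Z i i = ∑ k, A i k * Z k k := by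
  simp [Phi3]

theorem phi3_apply_of_ne (Z : Matrix (Fin d) (Fin d) ℂ) {i j : Fin d} (hij : i ≠ j) :
    Phi3 A B C Z i j = B i j * Z i j + C i j * Z j i := by
  simp [Phi3, hij]

theorem phi3_vecMulVec_single_apply_self (i j : Fin d) :
    Phi3 A B C (vecMulVec (Pi.single j 1) (star (Pi.single j 1))) i i = A i j := by
  rw [phi3_apply_self, Fintype.sum_eq_single j fun k hk => by simp [vecMulVec_apply, hk]]
  simp [vecMulVec_apply]

variable {i j : Fin d} (hij : i ≠ j) (t : ℂ)
include hij

theorem phi3_vecMulVec_pair_apply_left :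
    Phi3 A B C (vecMulVec (Pi.single i 1 + Pi.single j t)
      (star (Pi.single i 1 + Pi.single j t))) i i = A i i + A i j * (‖t‖ ^ 2 : ℝ) := by
  rw [phi3_apply_self, Fintype.sum_eq_add i j hij fun k hk => by simp [vecMulVec_apply, hk]]
  simp [vecMulVec_apply, hij, hij.symm, Complex.mul_conj']

theorem phi3_vecMulVec_pair_apply_right :
    Phi3 A B C (vecMulVec (Pi.single i 1 + Pi.single j t)
      (star (Pi.single i 1 + Pi.single j t))) j j = A j i + A j j * (‖t‖ ^ 2 : ℝ) := by
  rw [phi3_apply_self, Fintype.sum_eq_add i j hij fun k hk => by simp [vecMulVec_apply, hk]]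
  simp [vecMulVec_apply, hij, hij.symm, Complex.mul_conj']

theorem phi3_vecMulVec_pair_apply_left_right :
    Phi3 A B C (vecMulVec (Pi.single i 1 + Pi.single j t)
      (star (Pi.single i 1 + Pi.single j t))) i j = B i j * conj t + C i j * t := by
  simp [phi3_apply_of_ne _ _ _ _ hij, vecMulVec_apply, hij, hij.symm]

theorem phi3_vecMulVec_pair_apply_right_left :
    Phi3 A B C (vecMulVec (Pi.single i 1 + Pi.single j t)
      (star (Pi.single i 1 + Pi.single j t))) j i = B j i * t + C j i * conj t := by
  simp [phi3_apply_of_ne _ _ _ _ hij.symm, vecMulVec_apply, hij, hij.symm]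

end Entries

section Positive

variable {d : ℕ} {A B C : Matrix (Fin d) (Fin d) ℂ}
  (hpos : ∀ Z : Matrix (Fin d) (Fin d) ℂ, Z.PosSemidef → (Phi3 A B C Z).PosSemidef)
include hpos

theorem nonneg_of_phi3_posSemidef (i j : Fin d) : 0 ≤ A i j := by
  simpa only [phi3_vecMulVec_single_apply_self] using
    (hpos _ (posSemidef_vecMulVec_self_star (Pi.single j 1))).diag_nonneg (i := i)

theorem isHermitian_of_phi3_posSemidef (hdiag : ∀ i, A i i = B i i ∧ A i i = C i i) :
    B.IsHermitian ∧ C.IsHermitian := by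
  have key : ∀ i j, star (B j i) = B i j ∧ star (C j i) = C i j := by
    intro i j
    rcases eq_or_ne i j with rfl | hij
    · have hA := (IsSelfAdjoint.of_nonneg (nonneg_of_phi3_posSemidef hpos i i)).star_eq
      rw [← (hdiag i).1, ← (hdiag i).2]
      exact ⟨hA, hA⟩
    refine eq_and_eq_of_forall_mul_conj_add_mul fun t => ?_
    have hM := (hpos _ (posSemidef_vecMulVec_self_star
      (Pi.single i 1 + Pi.single j t))).isHermitian.apply i j
    rw [phi3_vecMulVec_pair_apply_left_right _ _ _ hij,
      phi3_vecMulVec_pair_apply_right_left _ _ _ hij] at hM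
    simpa [mul_comm] using hM
  exact ⟨IsHermitian.ext fun i j => (key i j).1, IsHermitian.ext fun i j => (key i j).2⟩

theorem norm_add_norm_le_of_phi3_posSemidef {i j : Fin d} (hij : i ≠ j) :
    ‖B i j‖ + ‖C i j‖ ≤ √((A i i).re * (A j j).re) + √((A i j).re * (A j i).re) := by
  have hre : ∀ k l, 0 ≤ (A k l).re := fun k l =>
    (Complex.nonneg_iff.mp (nonneg_of_phi3_posSemidef hpos k l)).1
  have hminor : ∀ s : ℝ, 0 < s → (‖B i j‖ + ‖C i j‖) ^ 2 * s ≤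
      ((A i i).re + (A i j).re * s) * ((A j i).re + (A j j).re * s) := by
    intro s hs
    obtain ⟨ζ, hζ, hphase⟩ := exists_norm_eq_one_norm_mul_conj_add_mul (B i j) (C i j)
    set t : ℂ := √s * ζ
    have ht : ‖t‖ ^ 2 = s := by
      simp [t, hζ, Real.sq_sqrt hs.le]
    have hoff : B i j * conj t + C i j * t = √s * (B i j * conj ζ + C i j * ζ) := by
      simp only [t, map_mul, Complex.conj_ofReal]
      ring
    have hM := (hpos _ (posSemidef_vecMulVec_self_star
      (Pi.single i 1 + Pi.single j t))).norm_apply_sq_le i j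
    rw [phi3_vecMulVec_pair_apply_left _ _ _ hij, phi3_vecMulVec_pair_apply_right _ _ _ hij,
      phi3_vecMulVec_pair_apply_left_right _ _ _ hij, hoff, norm_mul, hphase, ht] at hM
    simp only [Complex.norm_real, Real.norm_of_nonneg (Real.sqrt_nonneg s), mul_pow,
      Real.sq_sqrt hs.le, RCLike.re_to_complex, Complex.add_re, Complex.re_mul_ofReal] at hM
    linarith
  have hsq := le_sqrt_add_sqrt_sq_of_forall_pos (hre i i) (hre j j) (hre i j) (hre j i) hminor
  exact (pow_le_pow_iff_left₀ (by positivity) (by positivity) two_ne_zero).mp hsq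

end Positive

theorem stmt17 {d : ℕ} (A B C : Matrix (Fin d) (Fin d) ℂ)
    (hdiag : ∀ i, A i i = B i i ∧ A i i = C i i)
    (hpos : ∀ Z : Matrix (Fin d) (Fin d) ℂ, Z.PosSemidef → (Phi3 A B C Z).PosSemidef) :
    (∀ i j, (A i j).im = 0 ∧ 0 ≤ (A i j).re) ∧
    B.IsHermitian ∧ C.IsHermitian ∧
    (∀ i j, i ≠ j →
      0 ≤ Real.sqrt ((A i i).re * (A j j).re) + Real.sqrt ((A i j).re * (A j i).re)
            - ‖B i j‖ - ‖C i j‖) := by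
  obtain ⟨hB, hC⟩ := isHermitian_of_phi3_posSemidef hpos hdiag
  refine ⟨fun i j => ?_, hB, hC, fun i j hij => ?_⟩
  · obtain ⟨hre, him⟩ := Complex.nonneg_iff.mp (nonneg_of_phi3_posSemidef hpos i j)
    exact ⟨him.symm, hre⟩
  · linarith [norm_add_norm_le_of_phi3_posSemidef hpos hij]
end

section
/- Let (A₁,B₁,C₁) and (A₂,B₂,C₂) be triples of d×d complex matrices, each with equal diagonals. Then the composition of the associated maps satisfies Φ^{(3)}_{(A₁,B₁,C₁)} ∘ Φ^{(3)}_{(A₂,B₂,C₂)} = Φ^{(3)}_{(𝔄,𝔅,ℭ)}, where 𝔄 = A₁A₂, 𝔅 = B₁ ⊙ B₂ + C₁ ⊙ C₂ᵀ + diag(A₁A₂ − 2·(A₁ ⊙ A₂)), and ℭ = B₁ ⊙ C₂ + C₁ ⊙ B₂ᵀ + diag(A₁A₂ − 2·(A₁ ⊙ A₂)); here diag(M) denotes the diagonal matrix carrying the diagonal of M, and the triple (𝔄,𝔅,ℭ) again has equal diagonals. -/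
open Matrix

/-- `diagPart M` is the diagonal matrix carrying the diagonal of `M`. -/
def diagPart {d : ℕ} (M : Matrix (Fin d) (Fin d) ℂ) : Matrix (Fin d) (Fin d) ℂ :=
  Matrix.diagonal fun i => M i i

/-- `𝔄 = A₁ A₂` of the composition formula. -/
noncomputable def compA {d : ℕ} (A₁ A₂ : Matrix (Fin d) (Fin d) ℂ) :
    Matrix (Fin d) (Fin d) ℂ := A₁ * A₂

/-- `𝔅 = B₁ ⊙ B₂ + C₁ ⊙ C₂ᵀ + diag(A₁A₂ − 2 (A₁ ⊙ A₂))` of the composition formula. -/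
noncomputable def compB {d : ℕ} (A₁ B₁ C₁ A₂ B₂ C₂ : Matrix (Fin d) (Fin d) ℂ) :
    Matrix (Fin d) (Fin d) ℂ :=
  B₁ ⊙ B₂ + C₁ ⊙ C₂ᵀ + diagPart (A₁ * A₂ - 2 • (A₁ ⊙ A₂))

/-- `ℭ = B₁ ⊙ C₂ + C₁ ⊙ B₂ᵀ + diag(A₁A₂ − 2 (A₁ ⊙ A₂))` of the composition formula. -/
noncomputable def compC {d : ℕ} (A₁ B₁ C₁ A₂ B₂ C₂ : Matrix (Fin d) (Fin d) ℂ) :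
    Matrix (Fin d) (Fin d) ℂ :=
  B₁ ⊙ C₂ + C₁ ⊙ B₂ᵀ + diagPart (A₁ * A₂ - 2 • (A₁ ⊙ A₂))

lemma Phi3_apply {d : ℕ} (A B C Z : Matrix (Fin d) (Fin d) ℂ) (i j : Fin d) :
    Phi3 A B C Z i j =
      if i = j then ∑ k, A i k * Z k k else B i j * Z i j + C i j * Z j i := by
  simp only [Phi3, Matrix.add_apply, Matrix.hadamard_apply, Matrix.diagonal_apply,
    Matrix.of_apply, Matrix.transpose_apply]
  by_cases h : i = j <;> simp [h]

theorem stmt19 {d : ℕ} (A₁ B₁ C₁ A₂ B₂ C₂ : Matrix (Fin d) (Fin d) ℂ)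
    (hdiag₁ : ∀ i, A₁ i i = B₁ i i ∧ A₁ i i = C₁ i i)
    (hdiag₂ : ∀ i, A₂ i i = B₂ i i ∧ A₂ i i = C₂ i i) :
    (∀ Z : Matrix (Fin d) (Fin d) ℂ,
      Phi3 A₁ B₁ C₁ (Phi3 A₂ B₂ C₂ Z) =
        Phi3 (compA A₁ A₂) (compB A₁ B₁ C₁ A₂ B₂ C₂) (compC A₁ B₁ C₁ A₂ B₂ C₂) Z) ∧
    (∀ i, compA A₁ A₂ i i = compB A₁ B₁ C₁ A₂ B₂ C₂ i i ∧
          compA A₁ A₂ i i = compC A₁ B₁ C₁ A₂ B₂ C₂ i i) := by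
  constructor
  · intro Z
    ext i j
    by_cases h : i = j
    · subst h
      simp only [Phi3_apply, if_pos rfl, if_true]
      simp only [compA, Matrix.mul_apply, Finset.sum_mul, Finset.mul_sum]
      rw [Finset.sum_comm]
      exact Finset.sum_congr rfl fun k _ => Finset.sum_congr rfl fun l _ => by ring
    · have h' : j ≠ i := fun e => h e.symm
      simp only [Phi3_apply, if_neg h, if_neg h', compB, compC, diagPart,
        Matrix.add_apply, Matrix.hadamard_apply, Matrix.transpose_apply,
        Matrix.diagonal_apply, if_neg h]
      ring
  · intro i
    have h₁ := hdiag₁ i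
    have h₂ := hdiag₂ i
    simp only [compA, compB, compC, diagPart, Matrix.add_apply, Matrix.hadamard_apply,
      Matrix.transpose_apply, Matrix.diagonal_apply_eq, Matrix.sub_apply,
      Matrix.smul_apply, smul_eq_mul]
    constructor <;> · rw [← h₁.1, ← h₁.2, ← h₂.1, ← h₂.2]; ring
end
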